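/- arXiv:1808.02512 — 10 statements merged into one kernel-verified Lean document; each statement's English description precedes it below -/
import Mathlib

section
/- Let G be a graph and A, B disjoint vertex subsets with |A| ≥ |B| ≥ 1 such that the bipartite subgraph G[A,B] (all edges with one endpoint in A and one in B) has average degree d. Then there exists A' ⊆ A with |A'| = |B| such that G[A',B] has average degree at least d/2. -/
/-- Among the subsets of `A` of size `k`, some subset captures at least a `k/|A|` fraction of
the total sum of `f`. -/
lemma exists_subset_card_mul_sum_le {V : Type*} [DecidableEq V] (f : V → ℕ) :
    ∀ n (A : Finset V), A.card = n → ∀ k, k ≤ n →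
    ∃ A' ⊆ A, A'.card = k ∧ k * ∑ a ∈ A, f a ≤ n * ∑ a ∈ A', f a := by
  intro n
  induction n with
  | zero =>
    intro A hA k hk
    exact ⟨∅, by simp, by simp [Nat.le_zero.mp hk], by simp [Nat.le_zero.mp hk]⟩
  | succ n ih =>
    intro A hA k hk
    rcases Nat.eq_zero_or_pos k with hk0 | hk0
    · exact ⟨∅, by simp, by simp [hk0], by simp [hk0]⟩
    rcases eq_or_lt_of_le hk with h | h
    · exact ⟨A, Finset.Subset.refl A, by omega, by rw [h]⟩
    have hk' : k ≤ n := by omega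
    have hn : 0 < n := lt_of_lt_of_le hk0 hk'
    have hne : A.Nonempty := by rw [← Finset.card_pos]; omega
    obtain ⟨a, ha, hmin⟩ := Finset.exists_min_image A f hne
    obtain ⟨A', hsub, hcard, hsum⟩ :=
      ih (A.erase a) (by rw [Finset.card_erase_of_mem ha, hA]; omega) k hk'
    refine ⟨A', hsub.trans (Finset.erase_subset a A), hcard, ?_⟩
    have hS : ∑ x ∈ A.erase a, f x + f a = ∑ x ∈ A, f x :=
      Finset.sum_erase_add A f ha
    have hfa : n * f a ≤ ∑ x ∈ A.erase a, f x := by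
      have h1 : (n + 1) * f a ≤ ∑ x ∈ A, f x := by
        calc (n + 1) * f a = ∑ _x ∈ A, f a := by rw [Finset.sum_const, hA, smul_eq_mul]
        _ ≤ ∑ x ∈ A, f x := Finset.sum_le_sum fun x hx => hmin x hx
      rw [Nat.succ_mul] at h1
      omega
    apply Nat.le_of_mul_le_mul_left _ hn
    have h2 : k * (n * f a) ≤ k * ∑ x ∈ A.erase a, f x := Nat.mul_le_mul_left k hfa
    have h3 : (n + 1) * (k * ∑ x ∈ A.erase a, f x) ≤ (n + 1) * (n * ∑ a ∈ A', f a) :=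
      Nat.mul_le_mul_left (n + 1) hsum
    rw [← hS]
    nlinarith [h2, h3]

/-- If `A`, `B` are disjoint vertex subsets with `|A| ≥ |B| ≥ 1` and the bipartite subgraph
`G[A,B]` has average degree `d`, then there is `A' ⊆ A` with `|A'| = |B|` such that
`G[A',B]` has average degree at least `d / 2`. -/
theorem exists_equal_part_half_average_degree {V : Type*} [DecidableEq V]
    (G : SimpleGraph V) [DecidableRel G.Adj] (A B : Finset V) (d : ℝ)
    (hdisj : Disjoint A B) (hBA : B.card ≤ A.card) (hB : 1 ≤ B.card)
    (hd : d = 2 * (∑ a ∈ A, ((B.filter (G.Adj a)).card : ℝ)) / (A.card + B.card)) :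
    ∃ A' ⊆ A, A'.card = B.card ∧
      d / 2 ≤ 2 * (∑ a ∈ A', ((B.filter (G.Adj a)).card : ℝ)) / (A'.card + B.card) := by
  obtain ⟨A', hsub, hcard, hkey⟩ :=
    exists_subset_card_mul_sum_le (fun a => (B.filter (G.Adj a)).card) A.card A rfl
      B.card hBA
  refine ⟨A', hsub, hcard, ?_⟩
  have hkR : (0:ℝ) < B.card := by exact_mod_cast hB
  have hnR : (0:ℝ) < A.card := lt_of_lt_of_le hkR (by exact_mod_cast hBA)
  have hkey' : (B.card : ℝ) * ∑ a ∈ A, ((B.filter (G.Adj a)).card : ℝ)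
      ≤ (A.card : ℝ) * ∑ a ∈ A', ((B.filter (G.Adj a)).card : ℝ) := by
    exact_mod_cast hkey
  have hS' : (0:ℝ) ≤ ∑ a ∈ A', ((B.filter (G.Adj a)).card : ℝ) :=
    Finset.sum_nonneg fun a _ => by positivity
  rw [hd, hcard, div_div, div_le_div_iff₀ (by positivity) (by positivity)]
  nlinarith [hkey', hS', hkR]
end

section
/- Any triangle-free graph on n ≥ 2 vertices with m ≥ 1 edges and w_3 directed three-edge walks contains a bipartite induced subgraph of average degree at least w_3/(2nm). -/
/-- A set of vertices is stable (independent) if no two of its vertices are adjacent. -/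
def SimpleGraph.IsStableSet {V : Type*} (G : SimpleGraph V) (s : Set V) : Prop :=
  ∀ u ∈ s, ∀ v ∈ s, ¬ G.Adj u v

/-- The fractional chromatic number of a finite graph: the infimum of `a / b` over proper
`(a,b)`-colourings, i.e. assignments of `b`-element subsets of `{1,…,a}` to the vertices such
that adjacent vertices receive disjoint subsets. -/
noncomputable def SimpleGraph.fracChi {V : Type*} [Fintype V] (G : SimpleGraph V) : ℝ :=
  sInf { x : ℝ | ∃ a b : ℕ, 0 < b ∧
    (∃ c : V → Finset (Fin a), (∀ v, (c v).card = b) ∧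
      ∀ u v, G.Adj u v → Disjoint (c u) (c v)) ∧ x = (a : ℝ) / b }

section AuxWalk

open Finset

variable {V : Type*} [Fintype V] [DecidableEq V] (G : SimpleGraph V) [DecidableRel G.Adj]

/-- Number of 3-walks from `x` to `y` (x → a → w → y). -/
private def walkCnt (x y : V) : ℕ :=
  ∑ a ∈ G.neighborFinset x, ((G.neighborFinset y).filter (G.Adj a)).card

private lemma sum_walkCnt_inner (v : V) :
    ∑ y, ((G.neighborFinset y).filter (G.Adj v)).card
      = ∑ w ∈ G.neighborFinset v, G.degree w := by
  have h1 : ∀ y : V, ((G.neighborFinset y).filter (G.Adj v)).card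
      = ∑ w : V, if G.Adj y w ∧ G.Adj v w then 1 else 0 := by
    intro y
    rw [Finset.card_filter, G.neighborFinset_eq_filter, Finset.sum_filter]
    apply Finset.sum_congr rfl
    intro w _
    by_cases h : G.Adj y w <;> by_cases h' : G.Adj v w <;> simp [h, h']
  calc ∑ y, ((G.neighborFinset y).filter (G.Adj v)).card
      = ∑ y : V, ∑ w : V, if G.Adj y w ∧ G.Adj v w then 1 else 0 := by
        exact Finset.sum_congr rfl fun y _ => h1 y
    _ = ∑ w : V, ∑ y : V, if G.Adj y w ∧ G.Adj v w then 1 else 0 := Finset.sum_comm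
    _ = ∑ w : V, if G.Adj v w then G.degree w else 0 := by
        apply Finset.sum_congr rfl
        intro w _
        by_cases h' : G.Adj v w
        · simp only [h', and_true, if_true]
          have : ∑ y : V, (if G.Adj y w then 1 else 0)
              = (Finset.univ.filter (fun y => G.Adj y w)).card := by
            rw [Finset.card_filter]
          rw [this]
          have : Finset.univ.filter (fun y => G.Adj y w)
              = Finset.univ.filter (fun y => G.Adj w y) := by
            apply Finset.filter_congr
            intro y _
            simp [G.adj_comm]
          rw [this, ← G.neighborFinset_eq_filter, G.card_neighborFinset_eq_degree]
        · simp [h']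
    _ = ∑ w ∈ G.neighborFinset v, G.degree w := by
        rw [G.neighborFinset_eq_filter, Finset.sum_filter]

private lemma sum_walkCnt (x : V) :
    ∑ y, walkCnt G x y
      = ∑ v ∈ G.neighborFinset x, ∑ w ∈ G.neighborFinset v, G.degree w := by
  unfold walkCnt
  rw [Finset.sum_comm]
  exact Finset.sum_congr rfl fun v _ => sum_walkCnt_inner G v

end AuxWalk

/-- Any triangle-free graph on `n ≥ 2` vertices with `m ≥ 1` edges and `w₃` directed
three-edge walks contains a bipartite induced subgraph (two disjoint stable sets `A`, `B`,
the induced edges being exactly those between `A` and `B`) of average degree at least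
`w₃ / (2 n m)`. -/
theorem exists_bipartite_induced_average_degree {V : Type*} [Fintype V] [DecidableEq V]
    (G : SimpleGraph V) [DecidableRel G.Adj] (n m w3 : ℕ)
    (hn : Fintype.card V = n) (hn2 : 2 ≤ n)
    (hm : G.edgeFinset.card = m) (hm1 : 1 ≤ m)
    (htf : G.CliqueFree 3)
    (hw3 : w3 = ∑ x : V, ∑ v ∈ G.neighborFinset x, ∑ w ∈ G.neighborFinset v, G.degree w) :
    ∃ A B : Finset V, Disjoint A B ∧ G.IsStableSet ↑A ∧ G.IsStableSet ↑B ∧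
      (A ∪ B).Nonempty ∧
      (w3 : ℝ) / (2 * n * m) ≤
        2 * (∑ a ∈ A, ((B.filter (G.Adj a)).card : ℝ)) / (A.card + B.card) := by
  classical
  -- no triangles: no common neighbours of adjacent vertices
  have htri : ∀ a b c : V, G.Adj a b → G.Adj a c → G.Adj b c → False := by
    intro a b c h1 h2 h3
    exact htf {a, b, c} (SimpleGraph.is3Clique_triple_iff.mpr ⟨h1, h2, h3⟩)
  by_cases hw : w3 = 0
  · -- trivial case : take a single vertex and the empty set
    have hV : Nonempty V := by
      rw [← Fintype.card_pos_iff, hn]; omega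
    obtain ⟨v⟩ := hV
    refine ⟨{v}, ∅, ?_, ?_, ?_, ?_, ?_⟩
    · simp
    · intro a ha b hb hab
      simp only [Finset.coe_singleton, Set.mem_singleton_iff] at ha hb
      subst ha; subst hb
      exact G.irrefl hab
    · intro a ha
      simp at ha
    · simp
    · simp [hw]
  -- main case
  · -- the walk-counting function
    have hsumW : ∑ x : V, ∑ y : V, walkCnt G x y = w3 := by
      rw [hw3]
      exact Finset.sum_congr rfl fun x _ => sum_walkCnt G x
    have hsumD : ∑ x : V, ∑ y : V, (G.degree x + G.degree y) = 4 * n * m := by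
      have hdeg : ∑ v : V, G.degree v = 2 * m := by
        rw [G.sum_degrees_eq_twice_card_edges, hm]
      have : ∀ x : V, ∑ y : V, (G.degree x + G.degree y)
          = n * G.degree x + 2 * m := by
        intro x
        rw [Finset.sum_add_distrib, Finset.sum_const, hdeg, Finset.card_univ, hn,
          smul_eq_mul]
      rw [Finset.sum_congr rfl fun x _ => this x, Finset.sum_add_distrib,
        Finset.sum_const, Finset.card_univ, hn, ← Finset.mul_sum, hdeg, smul_eq_mul]
      ring
    -- key existence via averaging
    have key : ∃ x y : V, 1 ≤ walkCnt G x y ∧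
        w3 * (G.degree x + G.degree y) ≤ 4 * n * m * walkCnt G x y := by
      by_contra hcon
      push_neg at hcon
      -- some pair has a positive walk count
      have hex : ∃ p : V × V, walkCnt G p.1 p.2 ≠ 0 := by
        by_contra hall
        push_neg at hall
        apply hw
        rw [← hsumW]
        apply Finset.sum_eq_zero
        intro x _
        apply Finset.sum_eq_zero
        intro y _
        exact hall (x, y)
      obtain ⟨p₀, hp₀⟩ := hex
      have hlt : ∑ p : V × V, 4 * n * m * walkCnt G p.1 p.2
          < ∑ p : V × V, w3 * (G.degree p.1 + G.degree p.2) := by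
        apply Finset.sum_lt_sum
        · intro p _
          rcases Nat.eq_zero_or_pos (walkCnt G p.1 p.2) with h0 | h1
          · rw [h0, Nat.mul_zero]
            exact Nat.zero_le _
          · exact le_of_lt (hcon p.1 p.2 h1)
        · exact ⟨p₀, Finset.mem_univ _, hcon p₀.1 p₀.2 (Nat.one_le_iff_ne_zero.mpr hp₀)⟩
      rw [Fintype.sum_prod_type, Fintype.sum_prod_type] at hlt
      simp only [← Finset.mul_sum] at hlt
      rw [hsumW, hsumD] at hlt
      rw [Nat.mul_comm] at hlt
      exact lt_irrefl _ hlt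
    obtain ⟨x, y, hW1, hkey⟩ := key
    set A : Finset V := G.neighborFinset x \ G.neighborFinset y with hA
    set B : Finset V := G.neighborFinset y with hB
    -- edges from A to B equal the walk count
    have hedges : ∑ a ∈ A, (B.filter (G.Adj a)).card = walkCnt G x y := by
      unfold walkCnt
      apply Finset.sum_subset (Finset.sdiff_subset)
      intro a ha hna
      have hay : a ∈ G.neighborFinset y := by
        by_contra h
        exact hna (Finset.mem_sdiff.mpr ⟨ha, h⟩)
      rw [SimpleGraph.mem_neighborFinset] at hay
      rw [Finset.card_eq_zero]
      apply Finset.filter_eq_empty_iff.mpr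
      intro b hb
      rw [hB, SimpleGraph.mem_neighborFinset] at hb
      intro hab
      exact htri y a b hay hb hab
    -- B is nonempty
    have hBne : B.Nonempty := by
      rcases B.eq_empty_or_nonempty with h | h
      · exfalso
        rw [h] at hedges
        simp only [Finset.filter_empty, Finset.card_empty, Finset.sum_const_zero] at hedges
        omega
      · exact h
    have hcardB : B.card = G.degree y := by
      rw [hB, G.card_neighborFinset_eq_degree]
    have hcardA : A.card ≤ G.degree x := by
      calc A.card ≤ (G.neighborFinset x).card :=
            Finset.card_le_card Finset.sdiff_subset
        _ = G.degree x := G.card_neighborFinset_eq_degree x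
    refine ⟨A, B, Finset.sdiff_disjoint, ?_, ?_, ?_, ?_⟩
    · -- A stable
      intro a ha b hb hab
      rw [Finset.mem_coe, hA, Finset.mem_sdiff, SimpleGraph.mem_neighborFinset] at ha hb
      exact htri x a b ha.1 hb.1 hab
    · -- B stable
      intro a ha b hb hab
      rw [Finset.mem_coe, hB, SimpleGraph.mem_neighborFinset] at ha hb
      exact htri y a b ha hb hab
    · -- nonempty
      obtain ⟨b, hb⟩ := hBne
      exact ⟨b, Finset.mem_union_right _ hb⟩
    · -- the average degree bound
      have hkpos : 0 < A.card + B.card := by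
        have := Finset.card_pos.mpr hBne
        omega
      have hnm : (0 : ℝ) < 2 * (n : ℝ) * (m : ℝ) := by
        have hn0 : (0 : ℝ) < (n : ℝ) := by exact_mod_cast (by omega : 0 < n)
        have hm0 : (0 : ℝ) < (m : ℝ) := by exact_mod_cast (by omega : 0 < m)
        positivity
      have hkR : (0 : ℝ) < (A.card : ℝ) + (B.card : ℝ) := by
        exact_mod_cast hkpos
      have hsumcast : (∑ a ∈ A, ((B.filter (G.Adj a)).card : ℝ)) = (walkCnt G x y : ℝ) := by
        rw [← hedges]
        push_cast
        rfl
      rw [hsumcast, div_le_div_iff₀ hnm hkR]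
      have hnat : w3 * (A.card + B.card) ≤ 2 * walkCnt G x y * (2 * n * m) := by
        calc w3 * (A.card + B.card) ≤ w3 * (G.degree x + G.degree y) := by
              apply Nat.mul_le_mul_left
              omega
          _ ≤ 4 * n * m * walkCnt G x y := hkey
          _ = 2 * walkCnt G x y * (2 * n * m) := by ring
      calc (w3 : ℝ) * ((A.card : ℝ) + (B.card : ℝ))
          = ((w3 * (A.card + B.card) : ℕ) : ℝ) := by push_cast; ring
        _ ≤ ((2 * walkCnt G x y * (2 * n * m) : ℕ) : ℝ) := by exact_mod_cast hnat
        _ = 2 * (walkCnt G x y : ℝ) * (2 * (n : ℝ) * (m : ℝ)) := by push_cast; ring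
end

section
/- Let G be a triangle-free graph on n vertices with m ≥ 1 edges and w_3 directed three-edge walks. If for each vertex x we set S_x = N(x), and s_1, s_2 are chosen independently and uniformly at random from the vertex set, then the expected number of edges of the induced subgraph G[S_{s_1} ∪ S_{s_2}] equals (w_3/(2nm)) times half the expectation of |S_{s_1}| + |S_{s_2}|. -/
open Finset


/-- Let `G` be a triangle-free graph on `n` vertices with `m ≥ 1` edges and `w₃` directed
three-edge walks. Choosing `s₁, s₂` independently and uniformly at random and setting
`Sᵢ = N(sᵢ)`, the expected number of edges of the induced subgraph `G[S₁ ∪ S₂]` equals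
`(w₃ / (2 n m))` times half the expectation of `|S₁| + |S₂|`. -/
theorem expected_edges_of_union_of_neighborhoods {V : Type*} [Fintype V] [DecidableEq V]
    (G : SimpleGraph V) [DecidableRel G.Adj] (n m w3 : ℕ)
    (hn : Fintype.card V = n) (hm : G.edgeFinset.card = m) (hm1 : 1 ≤ m)
    (htf : G.CliqueFree 3)
    (hw3 : w3 = ∑ x : V, ∑ v ∈ G.neighborFinset x, ∑ w ∈ G.neighborFinset v, G.degree w) :
    (1 / (n : ℝ) ^ 2) * ∑ x : V, ∑ y : V,
        ((((G.neighborFinset x ∪ G.neighborFinset y) ×ˢ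
            (G.neighborFinset x ∪ G.neighborFinset y)).filter
              (fun p => G.Adj p.1 p.2)).card : ℝ) / 2
      = ((w3 : ℝ) / (2 * n * m)) *
        (((1 / (n : ℝ) ^ 2) * ∑ x : V, ∑ y : V, ((G.degree x : ℝ) + (G.degree y : ℝ))) / 2) := by
  classical
  have htri : ∀ x v w : V, G.Adj x v → G.Adj x w → G.Adj v w → False := by
    intro x v w h1 h2 h3
    exact htf {x, v, w} (SimpleGraph.is3Clique_triple_iff.2 ⟨h1, h2, h3⟩)
  -- split the filtered product
  have key : ∀ x y : V,
      (((G.neighborFinset x ∪ G.neighborFinset y) ×ˢ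
          (G.neighborFinset x ∪ G.neighborFinset y)).filter
            (fun p => G.Adj p.1 p.2)).card
      = ((G.neighborFinset x ×ˢ G.neighborFinset y).filter (fun p => G.Adj p.1 p.2)).card
        + ((G.neighborFinset y ×ˢ G.neighborFinset x).filter (fun p => G.Adj p.1 p.2)).card := by
    intro x y
    have hdisj : Disjoint
        ((G.neighborFinset x ×ˢ G.neighborFinset y).filter (fun p => G.Adj p.1 p.2))
        ((G.neighborFinset y ×ˢ G.neighborFinset x).filter (fun p => G.Adj p.1 p.2)) := by
      rw [Finset.disjoint_left]
      rintro ⟨v, w⟩ h1 h2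
      simp only [mem_filter, mem_product, SimpleGraph.mem_neighborFinset] at h1 h2
      exact htri x v w h1.1.1 h2.1.2 h1.2
    rw [← Finset.card_union_of_disjoint hdisj]
    congr 1
    ext ⟨v, w⟩
    simp only [mem_filter, mem_union, mem_product, SimpleGraph.mem_neighborFinset]
    constructor
    · rintro ⟨⟨h1 | h1, h2 | h2⟩, ha⟩
      · exact absurd ha (fun ha => htri x v w h1 h2 ha)
      · exact Or.inl ⟨⟨h1, h2⟩, ha⟩
      · exact Or.inr ⟨⟨h1, h2⟩, ha⟩
      · exact absurd ha (fun ha => htri y v w h1 h2 ha)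
    · rintro (⟨⟨h1, h2⟩, ha⟩ | ⟨⟨h1, h2⟩, ha⟩)
      · exact ⟨⟨Or.inl h1, Or.inr h2⟩, ha⟩
      · exact ⟨⟨Or.inr h1, Or.inl h2⟩, ha⟩
  -- neighbor-sum swap
  have hswap : ∀ (f : V → ℕ),
      (∑ x : V, ∑ v ∈ G.neighborFinset x, f v) = ∑ v : V, G.degree v * f v := by
    intro f
    have h1 : ∀ x : V, (∑ v ∈ G.neighborFinset x, f v)
        = ∑ v : V, if G.Adj x v then f v else 0 := by
      intro x
      rw [SimpleGraph.neighborFinset_eq_filter, Finset.sum_filter]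
    simp_rw [h1]
    rw [Finset.sum_comm]
    refine Finset.sum_congr rfl fun v _ => ?_
    have h2 : ∀ x : V, (if G.Adj x v then f v else 0) = (if G.Adj v x then 1 else 0) * f v := by
      intro x
      by_cases h : G.Adj x v
      · rw [if_pos h, if_pos h.symm, one_mul]
      · rw [if_neg h, if_neg (fun h' => h h'.symm), zero_mul]
    calc (∑ x : V, if G.Adj x v then f v else 0)
        = ∑ x : V, (if G.Adj v x then 1 else 0) * f v :=
          Finset.sum_congr rfl fun x _ => h2 x
      _ = (∑ x : V, if G.Adj v x then 1 else 0) * f v := by rw [Finset.sum_mul]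
      _ = G.degree v * f v := by
          congr 1
          rw [SimpleGraph.degree, SimpleGraph.neighborFinset_eq_filter, Finset.card_filter]
  -- card of A(x,y) as double sum
  have hA : ∀ x y : V,
      ((G.neighborFinset x ×ˢ G.neighborFinset y).filter (fun p => G.Adj p.1 p.2)).card
      = ∑ v ∈ G.neighborFinset x, ∑ w ∈ G.neighborFinset y, if G.Adj v w then 1 else 0 := by
    intro x y
    rw [Finset.card_filter, Finset.sum_product]
  have hsumA : (∑ x : V, ∑ y : V,
      ((G.neighborFinset x ×ˢ G.neighborFinset y).filter (fun p => G.Adj p.1 p.2)).card) = w3 := by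
    simp_rw [hA]
    have step1 : ∀ x : V, (∑ y : V, ∑ v ∈ G.neighborFinset x, ∑ w ∈ G.neighborFinset y,
        if G.Adj v w then 1 else 0)
        = ∑ v ∈ G.neighborFinset x, ∑ y : V, ∑ w ∈ G.neighborFinset y,
            if G.Adj v w then 1 else 0 := fun x => Finset.sum_comm
    simp_rw [step1]
    rw [hswap (fun v => ∑ y : V, ∑ w ∈ G.neighborFinset y, if G.Adj v w then 1 else 0)]
    have step2 : ∀ v : V, (∑ y : V, ∑ w ∈ G.neighborFinset y, if G.Adj v w then 1 else 0)
        = ∑ w : V, G.degree w * (if G.Adj v w then 1 else 0) :=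
      fun v => hswap (fun w => if G.Adj v w then 1 else 0)
    simp_rw [step2]
    rw [hw3, hswap (fun v => ∑ w ∈ G.neighborFinset v, G.degree w)]
    refine Finset.sum_congr rfl fun v _ => ?_
    congr 1
    rw [SimpleGraph.neighborFinset_eq_filter, Finset.sum_filter]
    refine Finset.sum_congr rfl fun w _ => ?_
    split <;> simp
  -- total sum = 2 * w3
  have htot : (∑ x : V, ∑ y : V,
      (((G.neighborFinset x ∪ G.neighborFinset y) ×ˢ
          (G.neighborFinset x ∪ G.neighborFinset y)).filter
            (fun p => G.Adj p.1 p.2)).card) = 2 * w3 := by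
    simp_rw [key, Finset.sum_add_distrib]
    rw [hsumA]
    have : (∑ x : V, ∑ y : V,
        ((G.neighborFinset y ×ˢ G.neighborFinset x).filter (fun p => G.Adj p.1 p.2)).card)
        = ∑ y : V, ∑ x : V,
        ((G.neighborFinset y ×ˢ G.neighborFinset x).filter (fun p => G.Adj p.1 p.2)).card :=
      Finset.sum_comm
    rw [this, hsumA]
    ring
  -- degree sum
  have hdeg : (∑ x : V, G.degree x) = 2 * m := by
    rw [← hm]; exact SimpleGraph.sum_degrees_eq_twice_card_edges G
  have hs : (∑ x : V, (G.degree x : ℝ)) = 2 * m := by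
    rw [← Nat.cast_sum, hdeg]; push_cast; ring
  have hdegR : (∑ x : V, ∑ y : V, ((G.degree x : ℝ) + (G.degree y : ℝ))) = 4 * n * m := by
    calc (∑ x : V, ∑ y : V, ((G.degree x : ℝ) + (G.degree y : ℝ)))
        = ∑ x : V, ((Fintype.card V : ℝ) * (G.degree x : ℝ) + ∑ y : V, (G.degree y : ℝ)) := by
          refine Finset.sum_congr rfl fun x _ => ?_
          rw [Finset.sum_add_distrib, Finset.sum_const, Finset.card_univ, nsmul_eq_mul]
      _ = (n : ℝ) * (2 * m) + (n : ℝ) * (2 * m) := by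
          rw [Finset.sum_add_distrib, ← Finset.mul_sum, hs, Finset.sum_const, Finset.card_univ,
            hn, nsmul_eq_mul]
      _ = 4 * n * m := by ring
  -- n, m positive
  have hn1 : 0 < n := by
    rcases Finset.card_pos.mp (by omega : 0 < G.edgeFinset.card) with ⟨e, he⟩
    have : Nonempty V := ⟨e.out.1⟩
    rw [← hn]; exact Fintype.card_pos
  -- finish
  have hLHS : (∑ x : V, ∑ y : V,
      ((((G.neighborFinset x ∪ G.neighborFinset y) ×ˢ
          (G.neighborFinset x ∪ G.neighborFinset y)).filter
            (fun p => G.Adj p.1 p.2)).card : ℝ) / 2) = w3 := by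
    simp_rw [← Finset.sum_div]
    have hc : (∑ x : V, ∑ y : V,
        ((((G.neighborFinset x ∪ G.neighborFinset y) ×ˢ
            (G.neighborFinset x ∪ G.neighborFinset y)).filter
              (fun p => G.Adj p.1 p.2)).card : ℝ)) = 2 * w3 := by exact_mod_cast htot
    rw [hc]; ring
  rw [hLHS, hdegR]
  have hn' : (n : ℝ) ≠ 0 := Nat.cast_ne_zero.2 (by omega)
  have hm' : (m : ℝ) ≠ 0 := Nat.cast_ne_zero.2 (by omega)
  field_simp
  ring
end

section
/- Any triangle-free graph on n ≥ 2 vertices with minimum degree at least d contains a bipartite induced subgraph of minimum degree at least d²/(2n). -/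
open Finset

namespace SimpleGraph

variable {V : Type*} {G : SimpleGraph V}

theorem IsStableSet.mono {s t : Set V} (ht : G.IsStableSet t) (hst : s ⊆ t) :
    G.IsStableSet s :=
  fun u hu v hv => ht u (hst hu) v (hst hv)

variable (G) [DecidableRel G.Adj]

def degreeIn (S : Finset V) (v : V) : ℕ := #(S.filter (G.Adj v))

theorem degreeIn_eq_zero_of_isStableSet {S : Finset V} (hS : G.IsStableSet S) {v : V}
    (hv : v ∈ S) : G.degreeIn S v = 0 :=
  card_eq_zero.2 <| filter_eq_empty_iff.2 fun _ hw => hS v hv _ hw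

theorem sum_degreeIn_comm (S T : Finset V) :
    ∑ v ∈ S, G.degreeIn T v = ∑ w ∈ T, G.degreeIn S w := by
  simp only [degreeIn, card_filter]
  rw [sum_comm]
  simp only [G.adj_comm]

section Fintype

variable [Fintype V]

theorem isStableSet_neighborFinset_of_triangleFree (h : G.CliqueFree 3) (v : V) :
    G.IsStableSet (G.neighborFinset v) := by
  rw [coe_neighborFinset]
  exact fun _ ha _ hb hab => isIndepSet_neighborSet_of_triangleFree G h v ha hb hab.ne hab

theorem degreeIn_univ (v : V) : G.degreeIn univ v = G.degree v := by
  rw [← card_neighborFinset_eq_degree, neighborFinset_eq_filter, degreeIn]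

theorem degreeIn_neighborFinset_comm (v w : V) :
    G.degreeIn (G.neighborFinset v) w = G.degreeIn (G.neighborFinset w) v := by
  unfold degreeIn
  congr 1
  ext x
  simp only [mem_filter, mem_neighborFinset]
  exact and_comm

theorem sum_degreeIn_neighborFinset (v : V) :
    ∑ w, G.degreeIn (G.neighborFinset w) v = ∑ x ∈ G.neighborFinset v, G.degree x := by
  simp only [← G.degreeIn_neighborFinset_comm v, sum_degreeIn_comm G univ, degreeIn_univ]

theorem degree_mul_sq_le_sum {d : ℕ} (hmin : ∀ v, d ≤ G.degree v) (u : V) :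
    G.degree u * d ^ 2 ≤
      ∑ w, ∑ a ∈ G.neighborFinset u, G.degreeIn (G.neighborFinset w) a := by
  rw [sum_comm]
  simp only [sum_degreeIn_neighborFinset]
  calc G.degree u * d ^ 2 = #(G.neighborFinset u) • (d * d) := by
        rw [card_neighborFinset_eq_degree, smul_eq_mul, sq]
    _ ≤ ∑ a ∈ G.neighborFinset u, G.degree a * d :=
        card_nsmul_le_sum _ _ _ fun a _ => Nat.mul_le_mul_right d (hmin a)
    _ ≤ ∑ a ∈ G.neighborFinset u, ∑ x ∈ G.neighborFinset a, G.degree x :=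
        sum_le_sum fun a _ => by
          simpa [card_neighborFinset_eq_degree] using
            card_nsmul_le_sum (G.neighborFinset a) _ _ fun x _ => hmin x

theorem exists_degree_add_degree_mul_sq_le [Nonempty V] {d : ℕ} (hmin : ∀ v, d ≤ G.degree v) :
    ∃ u w, (G.degree u + G.degree w) * d ^ 2 ≤
      2 * Fintype.card V * ∑ a ∈ G.neighborFinset u, G.degreeIn (G.neighborFinset w) a := by
  suffices h : ∑ u, ∑ w, (G.degree u + G.degree w) * d ^ 2 ≤
      ∑ u, ∑ w, 2 * Fintype.card V *
        ∑ a ∈ G.neighborFinset u, G.degreeIn (G.neighborFinset w) a by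
    rw [← Fintype.sum_prod_type', ← Fintype.sum_prod_type'] at h
    obtain ⟨p, -, hp⟩ := exists_le_of_sum_le univ_nonempty h
    exact ⟨p.1, p.2, hp⟩
  have hleft : ∑ u, ∑ w, (G.degree u + G.degree w) * d ^ 2 =
      2 * Fintype.card V * ∑ u, G.degree u * d ^ 2 := by
    simp only [add_mul, sum_add_distrib, sum_const, card_univ, smul_eq_mul]
    rw [← mul_sum]
    ring
  simp only [hleft, ← mul_sum]
  exact Nat.mul_le_mul_left _ (sum_le_sum fun u _ => G.degree_mul_sq_le_sum hmin u)

end Fintype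

variable [DecidableEq V]

theorem degreeIn_union {S T : Finset V} (hST : Disjoint S T) (v : V) :
    G.degreeIn (S ∪ T) v = G.degreeIn S v + G.degreeIn T v := by
  rw [degreeIn, filter_union, card_union_of_disjoint (disjoint_filter_filter hST)]
  rfl

theorem degreeIn_sdiff_of_isStableSet {S T : Finset V} (hS : G.IsStableSet S) {v : V}
    (hv : v ∈ S) : G.degreeIn (T \ S) v = G.degreeIn T v := by
  unfold degreeIn
  congr 1
  ext w
  simp only [mem_filter, mem_sdiff, and_congr_left_iff, and_iff_left_iff_imp]
  exact fun hvw _ hw => hS v hv w hw hvw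

theorem sum_degreeIn_union_of_isStableSet {A B : Finset V} (hA : G.IsStableSet A)
    (hB : G.IsStableSet B) (hAB : Disjoint A B) :
    ∑ v ∈ A ∪ B, G.degreeIn (A ∪ B) v = 2 * ∑ a ∈ A, G.degreeIn B a := by
  have hA' : ∀ a ∈ A, G.degreeIn (A ∪ B) a = G.degreeIn B a := fun a ha => by
    rw [G.degreeIn_union hAB, G.degreeIn_eq_zero_of_isStableSet hA ha, zero_add]
  have hB' : ∀ b ∈ B, G.degreeIn (A ∪ B) b = G.degreeIn A b := fun b hb => by
    rw [G.degreeIn_union hAB, G.degreeIn_eq_zero_of_isStableSet hB hb, add_zero]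
  rw [sum_union hAB, sum_congr rfl hA', sum_congr rfl hB', sum_degreeIn_comm G B A, two_mul]

theorem degreeIn_erase_add {S : Finset V} {v : V} (hv : v ∈ S) (w : V) :
    G.degreeIn (S.erase v) w + (if G.Adj w v then 1 else 0) = G.degreeIn S w := by
  simp only [degreeIn, card_filter]
  exact sum_erase_add S _ hv

theorem sum_degreeIn_erase_add {S : Finset V} {v : V} (hv : v ∈ S) :
    ∑ w ∈ S.erase v, G.degreeIn (S.erase v) w + 2 * G.degreeIn S v =
      ∑ w ∈ S, G.degreeIn S w := by
  have hdeg : G.degreeIn (S.erase v) v = G.degreeIn S v := by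
    simpa using G.degreeIn_erase_add hv v
  have hback : ∑ w ∈ S.erase v, (if G.Adj w v then 1 else 0) = G.degreeIn S v := by
    rw [← hdeg, ← card_filter, degreeIn]
    simp only [G.adj_comm]
  rw [← add_sum_erase S _ hv, ← sum_congr rfl fun w _ => G.degreeIn_erase_add hv w,
    sum_add_distrib, hback]
  ring

theorem exists_subset_forall_le_degreeIn (k : ℝ) (S : Finset V) (hS : S.Nonempty)
    (hsum : 2 * k * #S ≤ ∑ v ∈ S, (G.degreeIn S v : ℝ)) :
    ∃ T ⊆ S, T.Nonempty ∧ ∀ v ∈ T, k ≤ G.degreeIn T v := by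
  induction S using Finset.strongInduction with
  | H S ih =>
  by_cases hmin : ∀ v ∈ S, k ≤ G.degreeIn S v
  · exact ⟨S, subset_rfl, hS, hmin⟩
  push Not at hmin
  obtain ⟨v, hv, hlow⟩ := hmin
  have hsum' : ∑ w ∈ S.erase v, (G.degreeIn (S.erase v) w : ℝ) + 2 * G.degreeIn S v =
      ∑ w ∈ S, (G.degreeIn S w : ℝ) := by
    exact_mod_cast G.sum_degreeIn_erase_add hv
  have hcard : 2 * k * #(S.erase v) = 2 * k * #S - 2 * k := by
    rw [← card_erase_add_one hv]; push_cast; ring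
  have hlt : 2 * k * #(S.erase v) < ∑ w ∈ S.erase v, (G.degreeIn (S.erase v) w : ℝ) := by
    linarith
  have hne : (S.erase v).Nonempty := by
    rw [nonempty_iff_ne_empty]
    rintro h
    simp [h] at hlt
  obtain ⟨T, hT, hTne, hTmin⟩ := ih _ (erase_ssubset hv) hne hlt.le
  exact ⟨T, hT.trans (erase_subset v S), hTne, hTmin⟩

theorem exists_subsets_forall_le_degreeIn (k : ℝ) {A B : Finset V} (hA : G.IsStableSet A)
    (hB : G.IsStableSet B) (hAB : Disjoint A B) (hne : (A ∪ B).Nonempty)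
    (hdense : k * #(A ∪ B) ≤ ∑ a ∈ A, (G.degreeIn B a : ℝ)) :
    ∃ A' ⊆ A, ∃ B' ⊆ B, (A' ∪ B').Nonempty ∧
      ∀ v ∈ A' ∪ B', k ≤ G.degreeIn (A' ∪ B') v := by
  have hsum : 2 * k * #(A ∪ B) ≤ ∑ v ∈ A ∪ B, (G.degreeIn (A ∪ B) v : ℝ) := by
    rw [← Nat.cast_sum, G.sum_degreeIn_union_of_isStableSet hA hB hAB]
    push_cast
    linarith
  obtain ⟨T, hT, hTne, hTmin⟩ := G.exists_subset_forall_le_degreeIn k _ hne hsum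
  have hTB : T \ B ⊆ A := fun x hx =>
    (mem_union.1 (hT (mem_sdiff.1 hx).1)).resolve_right (mem_sdiff.1 hx).2
  refine ⟨T \ B, hTB, T ∩ B, inter_subset_right, ?_⟩
  rw [sdiff_union_inter]
  exact ⟨hTne, hTmin⟩

theorem exists_isStableSet_pair_le_sum_degreeIn [Fintype V] [Nonempty V]
    (htf : G.CliqueFree 3) {d : ℕ} (hd : 0 < d) (hmin : ∀ v, d ≤ G.degree v) :
    ∃ A B : Finset V, Disjoint A B ∧ G.IsStableSet A ∧ G.IsStableSet B ∧
      (A ∪ B).Nonempty ∧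
        #(A ∪ B) * d ^ 2 ≤ 2 * Fintype.card V * ∑ a ∈ A, G.degreeIn B a := by
  obtain ⟨u, w, huw⟩ := G.exists_degree_add_degree_mul_sq_le hmin
  have hA := G.isStableSet_neighborFinset_of_triangleFree htf u
  refine ⟨G.neighborFinset u, G.neighborFinset w \ G.neighborFinset u, disjoint_sdiff, hA,
    (G.isStableSet_neighborFinset_of_triangleFree htf w).mono (coe_subset.2 sdiff_subset),
    (card_pos.1 ?_).mono subset_union_left, ?_⟩
  · rw [card_neighborFinset_eq_degree]
    exact hd.trans_le (hmin u)
  have hcard : #(G.neighborFinset u ∪ G.neighborFinset w \ G.neighborFinset u) ≤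
      G.degree u + G.degree w := (card_union_le _ _).trans <| add_le_add
    (G.card_neighborFinset_eq_degree u).le
    ((card_le_card sdiff_subset).trans (G.card_neighborFinset_eq_degree w).le)
  rw [sum_congr rfl fun a ha => G.degreeIn_sdiff_of_isStableSet hA ha]
  exact (Nat.mul_le_mul_right _ hcard).trans huw

end SimpleGraph

/-- Any triangle-free graph on `n ≥ 2` vertices with minimum degree at least `d` contains a
bipartite induced subgraph (the disjoint union of two stable sets `A` and `B`) of minimum
degree at least `d² / (2n)`. -/
theorem exists_bipartite_induced_min_degree {V : Type*} [Fintype V] [DecidableEq V]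
    (G : SimpleGraph V) [DecidableRel G.Adj] (n d : ℕ)
    (hn : Fintype.card V = n) (hn2 : 2 ≤ n)
    (htf : G.CliqueFree 3) (hmin : ∀ v, d ≤ G.degree v) :
    ∃ A B : Finset V, Disjoint A B ∧ G.IsStableSet ↑A ∧ G.IsStableSet ↑B ∧
      (A ∪ B).Nonempty ∧
      ∀ v ∈ A ∪ B, (d : ℝ) ^ 2 / (2 * n) ≤ (((A ∪ B).filter (G.Adj v)).card : ℝ) := by
  have : Nonempty V := Fintype.card_pos_iff.1 (by omega)
  obtain rfl | hd := Nat.eq_zero_or_pos d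
  · obtain ⟨v⟩ := this
    refine ⟨{v}, ∅, disjoint_empty_right _, ?_, fun _ h => absurd h (by simp), by simp,
      fun _ _ => by simp⟩
    simp only [coe_singleton]
    rintro a rfl b rfl
    exact G.irrefl
  obtain ⟨A, B, hAB, hA, hB, hne, hdense⟩ :=
    G.exists_isStableSet_pair_le_sum_degreeIn htf hd hmin
  have hk : (d : ℝ) ^ 2 / (2 * n) * #(A ∪ B) ≤ ∑ a ∈ A, (G.degreeIn B a : ℝ) := by
    rw [div_mul_eq_mul_div, div_le_iff₀ (by norm_cast; omega)]
    have := (Nat.cast_le (α := ℝ)).2 hdense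
    push_cast [hn] at this
    linarith
  obtain ⟨A', hA', B', hB', hne', hdeg⟩ :=
    G.exists_subsets_forall_le_degreeIn _ hA hB hAB hne hk
  exact ⟨A', B', hAB.mono hA' hB', hA.mono (coe_subset.2 hA'), hB.mono (coe_subset.2 hB'),
    hne', hdeg⟩
end

section
/- Any graph on n ≥ 2 vertices with fractional chromatic number χ_f has list chromatic number at most ⌈χ_f · log n⌉. -/
/-- `G` has list chromatic number at most `k`: for every assignment of colour lists of size
`k` to the vertices there is a proper colouring choosing each vertex's colour from its list. -/
def SimpleGraph.ListChromAtMost {V : Type*} (G : SimpleGraph V) (k : ℕ) : Prop :=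
  ∀ L : V → Finset ℕ, (∀ v, (L v).card = k) →
    ∃ c : V → ℕ, (∀ v, c v ∈ L v) ∧ ∀ u v, G.Adj u v → c u ≠ c v

lemma exp_neg_lb {x : ℝ} (h0 : 0 ≤ x) (h1 : x ≤ 1) :
    1 - x ≤ Real.exp (-x) * (1 - 5 * x ^ 2 / 18) := by
  have habs : |(-x)| ≤ 1 := by rw [abs_neg, abs_of_nonneg h0]; exact h1
  have hb := Real.exp_bound habs (n := 3) (by norm_num)
  have hsum : ∑ m ∈ Finset.range 3, (-x) ^ m / (m.factorial : ℝ) = 1 - x + x ^ 2 / 2 := by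
    simp [Finset.sum_range_succ, Nat.factorial]
    ring
  rw [hsum] at hb
  have habs3 : |(-x)| ^ 3 * ((3:ℕ).succ / ((3:ℕ).factorial * (3:ℕ)) : ℝ) = 2 * x ^ 3 / 9 := by
    rw [abs_neg, abs_of_nonneg h0]
    norm_num [Nat.factorial]
    ring
  rw [habs3] at hb
  have hlb : Real.exp (-x) ≥ 1 - x + x ^ 2 / 2 - 2 * x ^ 3 / 9 := by
    have := abs_le.mp hb
    linarith [this.1]
  have hle1 : Real.exp (-x) ≤ 1 := by
    rw [Real.exp_le_one_iff]; linarith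
  nlinarith [sq_nonneg x, pow_le_pow_left₀ h0 h1 3, sq_nonneg (1-x),
    mul_nonneg (mul_nonneg h0 h0) h0]

set_option maxHeartbeats 1000000 in
lemma real_chain (χ L nR : ℝ) (hχ : 1 ≤ χ) (hL : 1/2 < L) (hn : Real.exp L = nR)
    (a b k : ℕ) (hb : 1 ≤ b) (hba : b ≤ a) (hk1 : 1 ≤ k) (hk : χ * L ≤ k)
    (hy : (a : ℝ) / b < χ + 5 / (18 * (χ + 1) ^ 2) / (2 * L)) :
    nR * (((a : ℝ) - b) / a) ^ k < 1 := by
  obtain ⟨c₀, hc₀⟩ : ∃ c : ℝ, c = 5 / (18 * (χ + 1) ^ 2) := ⟨_, rfl⟩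
  rw [← hc₀] at hy
  have hχ2 : (4:ℝ) ≤ (χ+1)^2 := by nlinarith
  have hc₀pos : 0 < c₀ := by rw [hc₀]; positivity
  have hc₀le : c₀ ≤ 5 / 72 := by
    rw [hc₀, div_le_div_iff₀ (by positivity) (by norm_num)]
    nlinarith
  obtain ⟨ε, hε⟩ : ∃ e : ℝ, e = c₀ / (2 * L) := ⟨_, rfl⟩
  rw [← hε] at hy
  have hεpos : 0 < ε := by rw [hε]; exact div_pos hc₀pos (by linarith)
  have hεle : ε ≤ 5 / 72 := by
    rw [hε, div_le_iff₀ (by linarith)]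
    nlinarith
  have hbR : (1:ℝ) ≤ (b:ℝ) := by exact_mod_cast hb
  have haR : (1:ℝ) ≤ (a:ℝ) := by
    have : 1 ≤ a := le_trans hb hba
    exact_mod_cast this
  have hbaR : (b:ℝ) ≤ (a:ℝ) := by exact_mod_cast hba
  have hapos : (0:ℝ) < a := by linarith
  obtain ⟨x, hx⟩ : ∃ y : ℝ, y = (b:ℝ) / a := ⟨_, rfl⟩
  have hxpos : 0 < x := by rw [hx]; exact div_pos (by linarith) hapos
  have hx1 : x ≤ 1 := by rw [hx, div_le_one hapos]; exact hbaR
  have hxy : x * ((a:ℝ)/b) = 1 := by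
    rw [hx, div_mul_div_comm, mul_comm (b:ℝ) (a:ℝ)]
    exact div_self (by positivity)
  have hxlb : 1 / (χ + 1) ≤ x := by
    have h1 : x * (χ + ε) > 1 := by
      calc 1 = x * ((a:ℝ)/b) := hxy.symm
      _ < x * (χ + ε) := by
          apply mul_lt_mul_of_pos_left _ hxpos
          exact hy
    rw [div_le_iff₀ (by linarith)]
    nlinarith
  have hcx : c₀ ≤ 5 * x ^ 2 / 18 := by
    rw [hc₀]
    rw [div_le_div_iff₀ (by positivity) (by norm_num)]
    have h2 : (1/(χ+1))^2 ≤ x^2 := by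
      apply pow_le_pow_left₀ (by positivity) hxlb
    have h3 : (1/(χ+1))^2 = 1/(χ+1)^2 := by rw [div_pow, one_pow]
    rw [h3] at h2
    rw [div_le_iff₀ (by positivity)] at h2
    nlinarith
  have hkR : (1:ℝ) ≤ (k:ℝ) := by exact_mod_cast hk1
  have hLpos : 0 < L := by linarith
  have hkx : L - c₀ / 2 ≤ (k:ℝ) * x := by
    -- k*x ≥ χ*L*x ≥ χ*L/(χ+ε) ≥ L - c₀/2
    have h1 : χ * L * x ≤ (k:ℝ) * x := by
      apply mul_le_mul_of_nonneg_right hk (le_of_lt hxpos)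
    have h2 : x * (χ + ε) ≥ 1 := by
      calc 1 = x * ((a:ℝ)/b) := hxy.symm
      _ ≤ x * (χ + ε) := le_of_lt (mul_lt_mul_of_pos_left hy hxpos)
    -- (L - c₀/2)(χ+ε) ≤ χL  since (c₀/2)(χ+ε) ≥ Lε = c₀/2 since χ+ε ≥ 1
    have h3 : (L - c₀/2) * (χ + ε) ≤ χ * L := by
      have : L * ε = c₀ / 2 := by
        have hL0 : L ≠ 0 := ne_of_gt (by linarith)
        rw [hε]
        field_simp
      have h6 : c₀/2 * 1 ≤ c₀/2 * (χ+ε) :=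
        mul_le_mul_of_nonneg_left (by linarith) (by linarith)
      have hexp : (L - c₀/2)*(χ+ε) = L*χ + L*ε - c₀/2*(χ+ε) := by ring
      rw [hexp, this]
      linarith
    have hχε : 0 < χ + ε := by linarith
    have hx2 : 1/(χ+ε) ≤ x := by rw [div_le_iff₀ hχε]; linarith
    have h4 : L - c₀/2 ≤ χ*L/(χ+ε) := by rw [le_div_iff₀ hχε]; linarith
    have h5 : χ*L/(χ+ε) ≤ χ*L*x := by
      calc χ*L/(χ+ε) = χ*L*(1/(χ+ε)) := by ring
      _ ≤ χ*L*x := by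
          apply mul_le_mul_of_nonneg_left hx2 (by positivity)
    linarith
  have hkey : (1 - x) ^ k ≤ Real.exp (-((k:ℝ)*x)) * (1 - c₀) := by
    have hbase := exp_neg_lb (le_of_lt hxpos) hx1
    have hfnn : (0:ℝ) ≤ 1 - 5 * x ^ 2 / 18 := by nlinarith [sq_nonneg x, hx1, hxpos.le]
    have h1 : (1 - x) ^ k ≤ (Real.exp (-x) * (1 - 5 * x ^ 2 / 18)) ^ k := by
      apply pow_le_pow_left₀ (by linarith) hbase
    have h2 : (Real.exp (-x) * (1 - 5 * x ^ 2 / 18)) ^ k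
        = Real.exp (-((k:ℝ)*x)) * (1 - 5 * x ^ 2 / 18) ^ k := by
      rw [mul_pow, ← Real.exp_nat_mul]
      ring_nf
    have h3 : (1 - 5 * x ^ 2 / 18) ^ k ≤ (1 - 5 * x ^ 2 / 18) ^ 1 := by
      apply pow_le_pow_of_le_one hfnn (by nlinarith) hk1
    rw [h2] at h1
    calc (1 - x) ^ k ≤ Real.exp (-((k:ℝ)*x)) * (1 - 5 * x ^ 2 / 18) ^ k := h1
    _ ≤ Real.exp (-((k:ℝ)*x)) * (1 - 5 * x ^ 2 / 18) := by
        apply mul_le_mul_of_nonneg_left _ (le_of_lt (Real.exp_pos _))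
        rw [pow_one] at h3; exact h3
    _ ≤ Real.exp (-((k:ℝ)*x)) * (1 - c₀) := by
        apply mul_le_mul_of_nonneg_left _ (le_of_lt (Real.exp_pos _))
        linarith
  have hexpkx : Real.exp (-((k:ℝ)*x)) ≤ Real.exp (c₀/2) / nR := by
    have : Real.exp (-((k:ℝ)*x)) ≤ Real.exp (c₀/2 - L) := by
      apply Real.exp_le_exp.mpr
      linarith
    rw [Real.exp_sub, hn] at this
    exact this
  have hnpos : 0 < nR := by rw [← hn]; exact Real.exp_pos _
  have hexpc : Real.exp (c₀/2) ≤ 1 / (1 - c₀/2) := by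
    have h1 : 1 - c₀/2 ≤ Real.exp (-(c₀/2)) := by
      have := Real.add_one_le_exp (-(c₀/2))
      linarith
    have h2 : (0:ℝ) < 1 - c₀/2 := by linarith
    rw [le_div_iff₀ h2]
    calc Real.exp (c₀/2) * (1 - c₀/2) ≤ Real.exp (c₀/2) * Real.exp (-(c₀/2)) := by
          apply mul_le_mul_of_nonneg_left h1 (le_of_lt (Real.exp_pos _))
    _ = 1 := by rw [← Real.exp_add]; simp
  have hcast : ((a : ℝ) - b) / a = 1 - x := by
    rw [hx]; field_simp
  rw [hcast]
  have hc1 : (0:ℝ) < 1 - c₀ := by linarith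
  calc nR * (1 - x) ^ k ≤ nR * (Real.exp (-((k:ℝ)*x)) * (1 - c₀)) := by
        apply mul_le_mul_of_nonneg_left hkey (le_of_lt hnpos)
  _ ≤ nR * (Real.exp (c₀/2) / nR * (1 - c₀)) := by
        apply mul_le_mul_of_nonneg_left _ (le_of_lt hnpos)
        apply mul_le_mul_of_nonneg_right hexpkx (le_of_lt hc1)
  _ = Real.exp (c₀/2) * (1 - c₀) := by field_simp
  _ ≤ 1 / (1 - c₀/2) * (1 - c₀) := by
        apply mul_le_mul_of_nonneg_right hexpc (le_of_lt hc1)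
  _ < 1 := by
        rw [div_mul_eq_mul_div, one_mul, div_lt_one (by linarith)]
        linarith

/-- Any graph on `n ≥ 2` vertices with fractional chromatic number `χ_f` has list chromatic
number at most `⌈χ_f · log n⌉`. -/
theorem listChrom_le_fracChi_mul_log {V : Type*} [Fintype V] [DecidableEq V]
    (G : SimpleGraph V) (n : ℕ) (hn : Fintype.card V = n) (hn2 : 2 ≤ n) :
    G.ListChromAtMost ⌈G.fracChi * Real.log n⌉₊ := by
  classical
  intro Lst hLst
  have hV : Nonempty V := by
    rw [← Fintype.card_pos_iff]; omega
  obtain ⟨v₀⟩ := hV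
  set S : Set ℝ := { x : ℝ | ∃ a b : ℕ, 0 < b ∧
    (∃ c : V → Finset (Fin a), (∀ v, (c v).card = b) ∧
      ∀ u v, G.Adj u v → Disjoint (c u) (c v)) ∧ x = (a : ℝ) / b } with hSdef
  have hfc : G.fracChi = sInf S := rfl
  have hS : S.Nonempty := by
    refine ⟨(Fintype.card V : ℝ) / 1, Fintype.card V, 1, one_pos,
      ⟨fun v => {(Fintype.equivFin V) v}, fun v => Finset.card_singleton _, ?_⟩, by norm_num⟩
    intro u v huv
    rw [Finset.disjoint_singleton]
    exact fun h => G.ne_of_adj huv ((Fintype.equivFin V).injective h)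
  have hba_of : ∀ (a b : ℕ) (c : V → Finset (Fin a)), (∀ v, (c v).card = b) → b ≤ a := by
    intro a b c hcard
    calc b = (c v₀).card := (hcard v₀).symm
    _ ≤ Fintype.card (Fin a) := Finset.card_le_univ _
    _ = a := Fintype.card_fin a
  have hac : ∀ y ∈ S, (1:ℝ) ≤ y := by
    rintro y ⟨a, b, hb, ⟨c, hcard, hdisj⟩, rfl⟩
    have hba : b ≤ a := hba_of a b c hcard
    rw [one_le_div (by exact_mod_cast hb)]
    exact_mod_cast hba
  have hχ1 : 1 ≤ G.fracChi := by
    rw [hfc]; exact le_csInf hS hac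
  set χ := G.fracChi with hχdef
  set L := Real.log n with hLdef
  have hL : 1/2 < L := by
    have h2 : Real.log 2 ≤ L := by
      rw [hLdef]
      apply Real.log_le_log (by norm_num)
      exact_mod_cast hn2
    linarith [Real.log_two_gt_d9]
  set k := ⌈χ * L⌉₊ with hkdef
  have hk : χ * L ≤ (k : ℝ) := Nat.le_ceil _
  have hk1 : 1 ≤ k := by
    rw [hkdef]
    rw [Nat.one_le_iff_ne_zero, ← Nat.pos_iff_ne_zero, Nat.ceil_pos]
    nlinarith
  -- choose a near-optimal colouring
  have hεpos : 0 < 5 / (18 * (χ + 1) ^ 2) / (2 * L) := by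
    apply div_pos
    · positivity
    · linarith
  obtain ⟨y, hyS, hylt⟩ := Real.lt_sInf_add_pos hS hεpos
  rw [← hfc] at hylt
  obtain ⟨a, b, hb, ⟨c, hcard, hdisj⟩, rfl⟩ := hyS
  have hba : b ≤ a := hba_of a b c hcard
  have ha1 : 1 ≤ a := le_trans hb hba
  -- the key numeric inequality, in ℕ
  have hchain := real_chain χ L n hχ1 hL (Real.exp_log (by positivity : (0:ℝ) < n))
    a b k hb hba hk1 hk hylt
  have hnat : n * (a - b) ^ k < a ^ k := by
    have hc1 : ((a:ℝ) - b) = ((a - b : ℕ) : ℝ) := by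
      rw [Nat.cast_sub hba]
    rw [hc1, div_pow, ← mul_div_assoc, div_lt_one (by positivity)] at hchain
    exact_mod_cast hchain
  -- counting
  set C : Finset ℕ := Finset.univ.biUnion Lst with hCdef
  have hsub : ∀ v, Lst v ⊆ C := fun v => Finset.subset_biUnion_of_mem Lst (Finset.mem_univ v)
  set m := C.card with hmdef
  have hkm : k ≤ m := by
    calc k = (Lst v₀).card := (hLst v₀).symm
    _ ≤ C.card := Finset.card_le_card (hsub v₀)
  set D : V → (↥C → Finset (Fin a)) :=
    fun v γ => if (γ:ℕ) ∈ Lst v then (c v)ᶜ else Finset.univ with hDdef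
  set B : V → Finset (↥C → Fin a) := fun v => Fintype.piFinset (D v) with hBdef
  have hfiltercard : ∀ v,
      (Finset.univ.filter (fun γ : ↥C => (γ:ℕ) ∈ Lst v)).card = k := by
    intro v
    rw [← hLst v]
    refine Finset.card_bij (fun γ _ => (γ : ℕ)) ?_ ?_ ?_
    · intro γ hγ
      exact (Finset.mem_filter.mp hγ).2
    · intro γ1 h1 γ2 h2 h
      exact Subtype.ext h
    · intro x hx
      exact ⟨⟨x, hsub v hx⟩, Finset.mem_filter.mpr ⟨Finset.mem_univ _, hx⟩, rfl⟩
  have hBcard : ∀ v, (B v).card = (a - b) ^ k * a ^ (m - k) := by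
    intro v
    rw [hBdef]
    rw [Fintype.card_piFinset]
    have hcards : ∀ γ : ↥C, (D v γ).card = if (γ:ℕ) ∈ Lst v then a - b else a := by
      intro γ
      by_cases h : (γ:ℕ) ∈ Lst v
      · simp only [hDdef, if_pos h, Finset.card_compl, Fintype.card_fin, hcard]
      · simp only [hDdef, if_neg h, Finset.card_univ, Fintype.card_fin]
    rw [Finset.prod_congr rfl (fun γ _ => hcards γ), Finset.prod_ite,
      Finset.prod_const, Finset.prod_const, hfiltercard v]
    congr 2
    have := Finset.card_filter_add_card_filter_not
      (s := (Finset.univ : Finset ↥C)) (fun γ : ↥C => (γ:ℕ) ∈ Lst v)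
    rw [hfiltercard v, Finset.card_univ, Fintype.card_coe] at this
    omega
  have htotal : Fintype.card (↥C → Fin a) = a ^ m := by
    rw [Fintype.card_fun, Fintype.card_fin, Fintype.card_coe]
  have hlt : ((Finset.univ : Finset V).biUnion B).card < a ^ m := by
    calc ((Finset.univ : Finset V).biUnion B).card
        ≤ ∑ v : V, (B v).card := Finset.card_biUnion_le
    _ = n * ((a - b) ^ k * a ^ (m - k)) := by
        rw [Finset.sum_congr rfl (fun v _ => hBcard v), Finset.sum_const,
          Finset.card_univ, hn, smul_eq_mul]
    _ = (n * (a - b) ^ k) * a ^ (m - k) := by ring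
    _ < a ^ k * a ^ (m - k) := by
        exact mul_lt_mul_of_pos_right hnat (by positivity)
    _ = a ^ m := by rw [← pow_add]; congr 1; omega
  obtain ⟨f, hf⟩ : ∃ f : ↥C → Fin a, f ∉ (Finset.univ : Finset V).biUnion B := by
    by_contra h
    push_neg at h
    have hsub2 : (Finset.univ : Finset (↥C → Fin a)) ⊆ (Finset.univ : Finset V).biUnion B :=
      fun f _ => h f
    have := Finset.card_le_card hsub2
    rw [Finset.card_univ, htotal] at this
    omega
  have hgood : ∀ v, ∃ γ : ↥C, (γ:ℕ) ∈ Lst v ∧ f γ ∈ c v := by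
    intro v
    have h1 : f ∉ B v := fun h => hf (Finset.mem_biUnion.mpr ⟨v, Finset.mem_univ v, h⟩)
    rw [hBdef, Fintype.mem_piFinset] at h1
    push_neg at h1
    obtain ⟨γ, hγ⟩ := h1
    by_cases h : (γ:ℕ) ∈ Lst v
    · refine ⟨γ, h, ?_⟩
      simp only [hDdef, if_pos h, Finset.mem_compl, not_not] at hγ
      exact hγ
    · exact absurd (by simp [hDdef, if_neg h] : f γ ∈ D v γ) hγ
  refine ⟨fun v => ((hgood v).choose : ℕ), fun v => (hgood v).choose_spec.1, ?_⟩
  intro u v huv heq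
  have h1 := (hgood u).choose_spec.2
  have h2 := (hgood v).choose_spec.2
  have heq2 : (hgood u).choose = (hgood v).choose := Subtype.ext heq
  rw [heq2] at h1
  exact Finset.disjoint_left.mp (hdisj u v huv) h1 h2
end

section
/- Let 𝒢 be a class of finite graphs closed under vertex deletion, and suppose for some x_0 ≥ 2 there is a continuous non-decreasing function f: [x_0, ∞) → (0,∞) such that every graph in 𝒢 on x ≥ x_0 vertices has a stable set of size at least f(x). Then every graph in 𝒢 on n ≥ x_0 vertices has chromatic number at most x_0 + ∫_{x_0}^{n} dx/f(x). -/
/-- A strictly monotone self-map of `Fin n` is the identity. -/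
lemma strictMono_fin_id {n : ℕ} (e : Fin n → Fin n) (he : StrictMono e) : e = id := by
  haveI : WellFoundedLT (Fin n) := inferInstance
  have h1 : ∀ i, i ≤ e i := fun i => he.le_apply
  have hg : StrictMono (fun i : Fin n => (e i.rev).rev) := by
    intro i j hij
    simpa [Fin.rev_lt_rev] using he (Fin.rev_lt_rev.mpr hij)
  have h2 : ∀ i : Fin n, e i ≤ i := by
    intro i
    have h3 : i.rev ≤ (e i).rev := by
      simpa [Fin.rev_rev] using hg.le_apply (x := i.rev)
    exact Fin.rev_le_rev.mp h3
  funext i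
  exact le_antisymm (h2 i) (h1 i)

/-- Closure under single vertex deletion gives closure under arbitrary induced subgraphs
(along strictly monotone maps). -/
lemma closure_comap (P : ∀ n : ℕ, SimpleGraph (Fin n) → Prop)
    (hclosed : ∀ (n : ℕ) (G : SimpleGraph (Fin (n + 1))) (v : Fin (n + 1)),
      P (n + 1) G → P n (G.comap v.succAbove)) :
    ∀ (n m : ℕ) (e : Fin m → Fin n), StrictMono e → ∀ G : SimpleGraph (Fin n),
      P n G → P m (G.comap e) := by
  intro n
  induction n with
  | zero =>
    intro m e he G hG
    have hm : m = 0 := by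
      by_contra h
      exact (e ⟨0, Nat.pos_of_ne_zero h⟩).elim0
    subst hm
    have : G.comap e = G := by
      ext a b
      exact a.elim0
    rwa [this]
  | succ n ih =>
    intro m e he G hG
    by_cases hm : m = n + 1
    · subst hm
      have := strictMono_fin_id e he
      subst this
      have : G.comap id = G := by ext a b; rfl
      rwa [this]
    · have hmn : m ≤ n := by
        have : m ≤ n + 1 := by
          by_contra h
          push_neg at h
          have := he.injective
          have hc := Fintype.card_le_of_injective e this
          simp at hc; omega
        omega
      have hns : ¬ Function.Surjective e := by
        intro hs
        have := Fintype.card_le_of_surjective e hs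
        simp at this; omega
      rw [Function.Surjective] at hns
      push_neg at hns
      obtain ⟨v, hv⟩ := hns
      -- build e' : Fin m → Fin n with v.succAbove ∘ e' = e
      obtain ⟨e', key⟩ : ∃ e' : Fin m → Fin n, ∀ i, v.succAbove (e' i) = e i := by
        rcases eq_or_ne v (Fin.last n) with rfl | hvl
        · refine ⟨fun i => (e i).castPred (hv i), fun i => ?_⟩
          rw [Fin.succAbove_last]
          exact Fin.castSucc_castPred _ _
        · obtain ⟨p, rfl⟩ : ∃ p : Fin n, v = p.castSucc :=
            ⟨v.castPred hvl, (Fin.castSucc_castPred _ _).symm⟩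
          exact ⟨fun i => p.predAbove (e i), fun i =>
            Fin.succAbove_predAbove (hv i)⟩
      have he' : StrictMono e' := by
        intro i j hij
        have : v.succAbove (e' i) < v.succAbove (e' j) := by
          rw [key, key]; exact he hij
        exact Fin.succAbove_lt_succAbove_iff.mp this
      have h1 := hclosed n G v hG
      have h2 := ih m e' he' _ h1
      have : (G.comap v.succAbove).comap e' = G.comap e := by
        ext a b
        simp only [SimpleGraph.comap_adj, key]
      rwa [this] at h2

/-- Extend a colouring of the complement of a stable set by one new colour. -/
lemma colorable_extend {n m k : ℕ} (G : SimpleGraph (Fin n)) (s : Finset (Fin n))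
    (hs : G.IsStableSet ↑s) (e : Fin m → Fin n)
    (hrange : ∀ v, v ∉ s → ∃ i, e i = v)
    (hc : (G.comap e).Colorable k) : G.Colorable (k + 1) := by
  obtain ⟨C⟩ := hc
  classical
  refine ⟨SimpleGraph.Coloring.mk
    (fun v => if h : v ∈ s then Fin.last k
      else Fin.castSucc (C (hrange v h).choose)) ?_⟩
  intro u v huv
  by_cases hu : u ∈ s <;> by_cases hv : v ∈ s
  · exact absurd huv (hs u hu v hv)
  · simp only [dif_pos hu, dif_neg hv]
    exact fun h => absurd h.symm (Fin.castSucc_lt_last _).ne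
  · simp only [dif_neg hu, dif_pos hv]
    exact fun h => absurd h (Fin.castSucc_lt_last _).ne
  · simp only [dif_neg hu, dif_neg hv]
    intro h
    have h' := Fin.castSucc_injective _ h
    have hu' := (hrange u hu).choose_spec
    have hv' := (hrange v hv).choose_spec
    have hadj : (G.comap e).Adj (hrange u hu).choose (hrange v hv).choose := by
      rw [SimpleGraph.comap_adj, hu', hv']; exact huv
    exact C.valid hadj h'

/-- Let `𝒢` be a class of finite graphs (on vertex sets `Fin n`) closed under vertex
deletion, and suppose for some `x₀ ≥ 2` there is a continuous, non-decreasing, positive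
function `f` on `[x₀, ∞)` such that every graph in `𝒢` on `x ≥ x₀` vertices has a stable set
of size at least `f x`. Then every graph in `𝒢` on `n ≥ x₀` vertices has chromatic number at
most `x₀ + ∫_{x₀}^{n} dx / f x`. -/
theorem chromatic_bound_of_stable_set_function
    (P : ∀ n : ℕ, SimpleGraph (Fin n) → Prop)
    (hclosed : ∀ (n : ℕ) (G : SimpleGraph (Fin (n + 1))) (v : Fin (n + 1)),
      P (n + 1) G → P n (G.comap v.succAbove))
    (x0 : ℝ) (hx0 : 2 ≤ x0) (f : ℝ → ℝ)
    (hfpos : ∀ x ∈ Set.Ici x0, 0 < f x)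
    (hfcont : ContinuousOn f (Set.Ici x0))
    (hfmono : MonotoneOn f (Set.Ici x0))
    (hstable : ∀ (x : ℕ) (G : SimpleGraph (Fin x)), x0 ≤ x → P x G →
      ∃ s : Finset (Fin x), G.IsStableSet ↑s ∧ f x ≤ s.card)
    (n : ℕ) (G : SimpleGraph (Fin n)) (hn : x0 ≤ n) (hG : P n G) :
    ∃ k : ℕ, G.Colorable k ∧ (k : ℝ) ≤ x0 + ∫ x in x0..(n : ℝ), 1 / f x := by
  -- integrability of 1/f on subintervals of [x0, ∞)
  have hint : ∀ a b : ℝ, x0 ≤ a → a ≤ b →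
      IntervalIntegrable (fun x => 1 / f x) MeasureTheory.volume a b := by
    intro a b ha hab
    apply ContinuousOn.intervalIntegrable
    rw [Set.uIcc_of_le hab]
    have hsub : Set.Icc a b ⊆ Set.Ici x0 := fun x hx => le_trans ha hx.1
    exact continuousOn_const.div (hfcont.mono hsub)
      (fun x hx => (hfpos x (hsub hx)).ne')
  -- lower bound on integrals
  have hlow : ∀ a b : ℝ, x0 ≤ a → a ≤ b →
      (b - a) / f b ≤ ∫ x in a..b, 1 / f x := by
    intro a b ha hab
    have hfb : 0 < f b := hfpos b (le_trans ha hab)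
    have hmono : ∀ x ∈ Set.Icc a b, (1 : ℝ) / f b ≤ 1 / f x := by
      intro x hx
      have hxI : x ∈ Set.Ici x0 := le_trans ha hx.1
      have hfx : 0 < f x := hfpos x hxI
      exact one_div_le_one_div_of_le hfx (hfmono hxI (le_trans ha hab) hx.2)
    have := intervalIntegral.integral_mono_on hab
      (intervalIntegrable_const) (hint a b ha hab) hmono
    rwa [intervalIntegral.integral_const, smul_eq_mul, mul_one_div] at this
  induction n using Nat.strong_induction_on with
  | _ n ih =>
  obtain ⟨s, hstab, hcard⟩ := hstable n G hn hG
  have hfn : 0 < f n := hfpos _ hn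
  have hscard1 : 1 ≤ s.card := by
    have : (0 : ℝ) < s.card := lt_of_lt_of_le hfn hcard
    exact_mod_cast Nat.succ_le_of_lt (by exact_mod_cast this)
  have hsn : s.card ≤ n := by
    simpa using Finset.card_le_univ s
  set m := n - s.card with hm
  have hcompl : sᶜ.card = m := by
    rw [Finset.card_compl]; simp [hm]
  have h2n : 2 ≤ (n : ℝ) := le_trans hx0 hn
  have hmltn : m < n := by
    have : 0 < n := by exact_mod_cast lt_of_lt_of_le (by norm_num : (0:ℝ) < 2) h2n
    omega
  -- the order embedding of Fin m onto the complement of s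
  let eiso := sᶜ.orderIsoOfFin hcompl
  let e : Fin m → Fin n := fun i => (eiso i : Fin n)
  have he : StrictMono e := fun i j hij => by
    simpa [e] using (eiso.lt_iff_lt.mpr hij)
  have hrange : ∀ v, v ∉ s → ∃ i, e i = v := by
    intro v hv
    refine ⟨eiso.symm ⟨v, Finset.mem_compl.mpr hv⟩, ?_⟩
    simp [e]
  have hGm : P m (G.comap e) :=
    closure_comap P hclosed n m e he G hG
  have hmcast : (m : ℝ) = (n : ℝ) - s.card := by
    rw [hm]; push_cast [Nat.cast_sub hsn]; ring
  rcases le_or_gt x0 (m : ℝ) with hx0m | hx0m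
  · -- recursive case
    obtain ⟨k, hcol, hk⟩ := ih m hmltn (G.comap e) hx0m hGm
    refine ⟨k + 1, colorable_extend G s hstab e hrange hcol, ?_⟩
    have hmn : (m : ℝ) ≤ n := by exact_mod_cast hmltn.le
    have hsplit : (∫ x in x0..(m : ℝ), 1 / f x) + (∫ x in (m : ℝ)..(n : ℝ), 1 / f x)
        = ∫ x in x0..(n : ℝ), 1 / f x :=
      intervalIntegral.integral_add_adjacent_intervals
        (hint x0 m le_rfl hx0m) (hint m n hx0m hmn)
    have h1 : ((n : ℝ) - m) / f n ≤ ∫ x in (m : ℝ)..(n : ℝ), 1 / f x :=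
      hlow m n hx0m hmn
    have h2 : (1 : ℝ) ≤ ((n : ℝ) - m) / f n := by
      rw [hmcast]
      have : (n : ℝ) - ((n : ℝ) - s.card) = s.card := by ring
      rw [this]
      exact (one_le_div hfn).mpr hcard
    push_cast
    linarith
  · -- terminal case : m < x0
    have hcol : (G.comap e).Colorable m := by
      simpa using (G.comap e).colorable_of_fintype
    refine ⟨m + 1, colorable_extend G s hstab e hrange hcol, ?_⟩
    have h1 : ((n : ℝ) - x0) / f n ≤ ∫ x in x0..(n : ℝ), 1 / f x :=
      hlow x0 n le_rfl hn
    have hInonneg : 0 ≤ ∫ x in x0..(n : ℝ), 1 / f x := by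
      have : (0 : ℝ) ≤ ((n : ℝ) - x0) / f n :=
        div_nonneg (by linarith) hfn.le
      linarith
    rcases le_or_gt ((m : ℝ) + 1) x0 with hcase | hcase
    · push_cast
      linarith
    · -- here x0 - m < 1
      have hsr : (1 : ℝ) ≤ (s.card : ℝ) := by exact_mod_cast hscard1
      have hkey : ((m : ℝ) + 1 - x0) * f n ≤ (n : ℝ) - x0 := by
        have hfc : f n ≤ (s.card : ℝ) := hcard
        nlinarith [mul_nonneg (sub_nonneg.mpr hsr)
          (sub_nonneg.mpr (le_of_lt (by linarith : (0:ℝ) < (m:ℝ) + 1 - x0)))]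
      have h3 : (m : ℝ) + 1 - x0 ≤ ((n : ℝ) - x0) / f n :=
        (le_div_iff₀ hfn).mpr hkey
      push_cast
      linarith
end

section
/- Fix an integer r ≥ 3. Any K_{1,1,r-2}-free graph on n vertices with minimum degree at least d, where r-2 ≤ d ≤ n, has fractional chromatic number at most C(n, r-2)/C(d, r-2), where C(a,b) denotes the binomial coefficient. -/
/-- `G` contains no subgraph isomorphic to `H`. -/
def SubgraphFree {W V : Type*} (H : SimpleGraph W) (G : SimpleGraph V) : Prop :=
  ¬ ∃ f : W ↪ V, ∀ a b, H.Adj a b → G.Adj (f a) (f b)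

set_option maxHeartbeats 1000000 in
theorem key' {V : Type*} [Fintype V] [DecidableEq V]
    (G : SimpleGraph V) [DecidableRel G.Adj] (k : ℕ)
    (hfree : ¬ ∃ f : ((i : Fin 3) × ![Fin 1, Fin 1, Fin k] i) ↪ V, ∀ a b,
      (SimpleGraph.completeMultipartiteGraph ![Fin 1, Fin 1, Fin k]).Adj a b → G.Adj (f a) (f b))
    (S : Finset V) (hS : S.card = k) (u v : V) (huv : G.Adj u v)
    (hSu : S ⊆ G.neighborFinset u) (hSv : S ⊆ G.neighborFinset v) : False := by
  apply hfree
  have e : Fin k ≃ S := (Finset.equivFinOfCardEq hS).symm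
  have hu : ∀ j : Fin k, (e j : V) ≠ u := fun j hj => by
    have := hSu (e j).2; rw [hj] at this
    exact G.notMem_neighborFinset_self u this
  have hv : ∀ j : Fin k, (e j : V) ≠ v := fun j hj => by
    have := hSv (e j).2; rw [hj] at this
    exact G.notMem_neighborFinset_self v this
  have hadj : ∀ j : Fin k, G.Adj u (e j : V) := fun j =>
    (G.mem_neighborFinset u _).mp (hSu (e j).2)
  have hadj' : ∀ j : Fin k, G.Adj v (e j : V) := fun j =>
    (G.mem_neighborFinset v _).mp (hSv (e j).2)
  refine ⟨⟨fun x => match x with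
    | ⟨⟨0, _⟩, _⟩ => u
    | ⟨⟨1, _⟩, _⟩ => v
    | ⟨⟨2, _⟩, j⟩ => (e j : V), ?_⟩, ?_⟩
  · rintro ⟨⟨i, hi⟩, xi⟩ ⟨⟨j, hj⟩, xj⟩ h
    interval_cases i <;> interval_cases j <;>
      first
      | exact congrArg (fun t => (⟨⟨0, by omega⟩, t⟩ : (i : Fin 3) × ![Fin 1, Fin 1, Fin k] i))
          (Subsingleton.elim (α := Fin 1) xi xj)
      | exact congrArg (fun t => (⟨⟨1, by omega⟩, t⟩ : (i : Fin 3) × ![Fin 1, Fin 1, Fin k] i))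
          (Subsingleton.elim (α := Fin 1) xi xj)
      | exact congrArg (fun t => (⟨⟨2, by omega⟩, t⟩ : (i : Fin 3) × ![Fin 1, Fin 1, Fin k] i))
          (e.injective (Subtype.val_injective h))
      | exact absurd h (G.ne_of_adj huv)
      | exact absurd h (G.ne_of_adj huv).symm
      | exact absurd h.symm (hu xj)
      | exact absurd h (hu xi)
      | exact absurd h.symm (hv xj)
      | exact absurd h (hv xi)
  · rintro ⟨⟨i, hi⟩, xi⟩ ⟨⟨j, hj⟩, xj⟩ h
    replace h : (⟨i, hi⟩ : Fin 3) ≠ ⟨j, hj⟩ := h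
    interval_cases i <;> interval_cases j <;>
      first
      | exact absurd rfl h
      | exact huv
      | exact huv.symm
      | exact hadj xj
      | exact (hadj xi).symm
      | exact hadj' xj
      | exact (hadj' xi).symm

theorem main' {V : Type*} [Fintype V] [DecidableEq V]
    (G : SimpleGraph V) [DecidableRel G.Adj] (r n d : ℕ) (hr : 3 ≤ r)
    (hn : Fintype.card V = n)
    (hfree : ¬ ∃ f : ((i : Fin 3) × ![Fin 1, Fin 1, Fin (r - 2)] i) ↪ V, ∀ a b,
      (SimpleGraph.completeMultipartiteGraph ![Fin 1, Fin 1, Fin (r - 2)]).Adj a b → G.Adj (f a) (f b))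
    (hd1 : r - 2 ≤ d) (hd2 : d ≤ n) (hmin : ∀ v, d ≤ G.degree v) :
    (sInf { x : ℝ | ∃ a b : ℕ, 0 < b ∧
    (∃ c : V → Finset (Fin a), (∀ v, (c v).card = b) ∧
      ∀ u v, G.Adj u v → Disjoint (c u) (c v)) ∧ x = (a : ℝ) / b }) ≤ (n.choose (r - 2) : ℝ) / (d.choose (r - 2)) := by
  set k := r - 2 with hk
  set a := n.choose k with ha
  set b := d.choose k with hb
  have hbpos : 0 < b := Nat.choose_pos hd1
  -- the type of k-subsets
  have hcardT : Fintype.card {s : Finset V // s.card = k} = a := by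
    rw [Fintype.card_finset_len, hn]
  let E : {s : Finset V // s.card = k} ≃ Fin a :=
    (Fintype.equivFinOfCardEq hcardT)
  -- for each vertex, the family of k-subsets of its neighbourhood
  let F : V → Finset {s : Finset V // s.card = k} := fun v =>
    Finset.univ.filter (fun S => S.1 ⊆ G.neighborFinset v)
  have hFcard : ∀ v, (F v).card = (G.degree v).choose k := by
    intro v
    rw [← SimpleGraph.card_neighborFinset_eq_degree, ← Finset.card_powersetCard]
    apply Finset.card_bij (fun S _ => S.1)
    · intro S hS
      simp only [F, Finset.mem_filter] at hS
      rw [Finset.mem_powersetCard]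
      exact ⟨hS.2, S.2⟩
    · intro S hS T hT h
      exact Subtype.ext h
    · intro S hS
      rw [Finset.mem_powersetCard] at hS
      exact ⟨⟨S, hS.2⟩, by simp [F, hS.1], rfl⟩
  have hFb : ∀ v, b ≤ (F v).card := by
    intro v
    rw [hFcard v]
    exact Nat.choose_le_choose k (hmin v)
  have hchoice : ∀ v, ∃ t : Finset {s : Finset V // s.card = k}, t ⊆ F v ∧ t.card = b :=
    fun v => Finset.exists_subset_card_eq (hFb v)
  choose t htF htb using hchoice
  have hmem : ((a : ℝ) / b) ∈ { x : ℝ | ∃ a b : ℕ, 0 < b ∧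
    (∃ c : V → Finset (Fin a), (∀ v, (c v).card = b) ∧
      ∀ u v, G.Adj u v → Disjoint (c u) (c v)) ∧ x = (a : ℝ) / b } := by
    refine ⟨a, b, hbpos, ⟨fun v => (t v).map E.toEmbedding, ?_, ?_⟩, rfl⟩
    · intro v; rw [Finset.card_map]; exact htb v
    · intro u v huv
      rw [Finset.disjoint_map]
      rw [Finset.disjoint_left]
      intro S hSu hSv
      have h1 := htF u hSu
      have h2 := htF v hSv
      simp only [F, Finset.mem_filter] at h1 h2
      exact key' G k hfree S.1 S.2 u v huv h1.2 h2.2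
  have hbdd : BddBelow { x : ℝ | ∃ a b : ℕ, 0 < b ∧
    (∃ c : V → Finset (Fin a), (∀ v, (c v).card = b) ∧
      ∀ u v, G.Adj u v → Disjoint (c u) (c v)) ∧ x = (a : ℝ) / b } := by
    refine ⟨0, ?_⟩
    rintro x ⟨a', b', hb', _, rfl⟩
    positivity
  exact csInf_le hbdd hmem

/-- Fix `r ≥ 3`. Any `K_{1,1,r-2}`-free graph on `n` vertices with minimum degree at least
`d`, where `r - 2 ≤ d ≤ n`, has fractional chromatic number at most
`C(n, r-2) / C(d, r-2)`. -/

theorem fracChi_le_of_K11r2_free {V : Type*} [Fintype V] [DecidableEq V]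
    (G : SimpleGraph V) [DecidableRel G.Adj] (r n d : ℕ) (hr : 3 ≤ r)
    (hn : Fintype.card V = n)
    (hfree : SubgraphFree (SimpleGraph.completeMultipartiteGraph ![Fin 1, Fin 1, Fin (r - 2)]) G)
    (hd1 : r - 2 ≤ d) (hd2 : d ≤ n) (hmin : ∀ v, d ≤ G.degree v) :
    G.fracChi ≤ (n.choose (r - 2) : ℝ) / (d.choose (r - 2)) := by
  exact main' G r n d hr hn hfree hd1 hd2 hmin
end

section
/- Fix an integer r ≥ 3. Any C_r-free graph on n vertices with minimum degree at least d > 0 has fractional chromatic number at most (r-2)·n/d. -/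
open Finset

namespace SimpleGraph

variable {V : Type*} (G : SimpleGraph V)

theorem not_isContained_of_subgraphFree {W : Type*} {H : SimpleGraph W}
    (h : SubgraphFree H G) : ¬ H ⊑ G :=
  fun ⟨f⟩ ↦ h ⟨f.toEmbedding, fun _ _ ↦ f.toHom.map_adj⟩

theorem cycleGraph_isContained_of_isPath_of_forall_adj {r : ℕ} (hr : 3 ≤ r) {u x y : V}
    (p : G.Walk x y) (hp : p.IsPath) (hu : ∀ z ∈ p.support, G.Adj u z)
    (hlen : p.length + 2 = r) : cycleGraph r ⊑ G := by
  have hux : G.Adj u x := hu x p.start_mem_support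
  have hyu : G.Adj y u := (hu y p.end_mem_support).symm
  have hup : u ∉ p.support := fun h ↦ G.irrefl (hu u h)
  refine (cycleGraph_isContained_iff (by omega)).2
    ⟨u, .cons hux (p.concat hyu), (Walk.cons_isCycle_iff _ _).2 ⟨hp.concat hup hyu, ?_⟩, ?_⟩
  · rw [Walk.edges_concat, List.concat_eq_append, List.mem_append, List.mem_singleton, not_or]
    refine ⟨fun he ↦ hup (p.fst_mem_support_of_mem_edges he), fun he ↦ ?_⟩
    obtain rfl : x = y := by
      rcases Sym2.eq_iff.1 he with ⟨-, rfl⟩ | ⟨-, rfl⟩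
      · exact (G.irrefl hux).elim
      · rfl
    rw [(Walk.isPath_iff_nil.1 hp).length_eq_zero] at hlen
    omega
  · rw [Walk.length_cons, Walk.length_concat]
    omega

section Degenerate

variable [DecidableRel G.Adj]

theorem exists_card_adj_lt_of_isPath_length_ne {t : Finset V} (ht : t.Nonempty) {k : ℕ}
    (h : ∀ x y (p : G.Walk x y), p.IsPath → (∀ z ∈ p.support, z ∈ t) → p.length ≠ k) :
    ∃ v ∈ t, #{w ∈ t | G.Adj v w} < k := by
  classical
  by_contra! hdeg
  -- Since every vertex of `t` has at least `k` neighbours in `t`, a path in `t` on at most `k`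
  -- vertices extends inside `t` at its endpoint.
  have hpath : ∀ m ≤ k, ∃ x y, ∃ p : G.Walk x y, p.IsPath ∧ (∀ z ∈ p.support, z ∈ t) ∧
      p.length = m := by
    intro m
    induction m with
    | zero =>
      obtain ⟨x, hx⟩ := ht
      exact fun _ ↦ ⟨x, x, .nil, Walk.IsPath.nil, by simpa using hx, rfl⟩
    | succ m ih =>
      intro hm
      obtain ⟨x, y, p, hp, hpt, rfl⟩ := ih (by omega)
      have hcard : #(p.support.toFinset.erase y) < #{w ∈ t | G.Adj y w} := by
        rw [card_erase_of_mem (by simp), List.toFinset_card_of_nodup hp.support_nodup,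
          Walk.length_support]
        exact lt_of_lt_of_le (by omega) (hdeg y (hpt y p.end_mem_support))
      obtain ⟨w, hw, hwp⟩ := exists_mem_notMem_of_card_lt_card hcard
      rw [mem_filter] at hw
      have hwp' : w ∉ p.support := by
        simpa [G.ne_of_adj hw.2 |>.symm] using hwp
      refine ⟨x, w, p.concat hw.2, hp.concat hwp' hw.2, ?_, by simp⟩
      simp only [Walk.support_concat, List.mem_append, List.mem_singleton]
      rintro z (hz | rfl)
      exacts [hpt z hz, hw.1]
  obtain ⟨x, y, p, hp, hpt, hlen⟩ := hpath k le_rfl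
  exact h x y p hp hpt hlen

theorem colorable_induce_of_forall_exists_card_adj_lt {s : Finset V} {k : ℕ}
    (h : ∀ t ⊆ s, t.Nonempty → ∃ v ∈ t, #{w ∈ t | G.Adj v w} < k) :
    (G.induce (s : Set V)).Colorable k := by
  suffices ∃ f : V → ℕ, (∀ x ∈ s, f x < k) ∧ ∀ x ∈ s, ∀ y ∈ s, G.Adj x y → f x ≠ f y by
    obtain ⟨f, hlt, hf⟩ := this
    exact ⟨.mk (fun x ↦ ⟨f x, hlt x x.2⟩)
      fun {x y} hxy heq ↦ hf x x.2 y y.2 hxy (congrArg Fin.val heq)⟩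
  classical
  induction s using Finset.strongInduction with | H s ih =>
  rcases s.eq_empty_or_nonempty with rfl | hs
  · exact ⟨0, by simp, by simp⟩
  obtain ⟨v, hv, hvk⟩ := h s subset_rfl hs
  obtain ⟨f, hlt, hf⟩ := ih (s.erase v) (erase_ssubset hv)
    fun t ht ↦ h t (ht.trans (erase_subset v s))
  have hcard : #({w ∈ s | G.Adj v w}.image f) < #(range k) :=
    card_image_le.trans_lt (by simpa using hvk)
  obtain ⟨c, hck, hcf⟩ := exists_mem_notMem_of_card_lt_card hcard
  have hc : ∀ w ∈ s, G.Adj v w → c ≠ f w :=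
    fun w hw hvw hcw ↦ hcf (mem_image.2 ⟨w, mem_filter.2 ⟨hw, hvw⟩, hcw.symm⟩)
  refine ⟨Function.update f v c, fun x hx ↦ ?_, fun x hx y hy hxy ↦ ?_⟩
  · rw [Function.update_apply]
    split_ifs with hxv
    exacts [mem_range.1 hck, hlt x (mem_erase.2 ⟨hxv, hx⟩)]
  · simp only [Function.update_apply]
    split_ifs with hxv hyv hyv
    · exact absurd (hxv.trans hyv.symm) (G.ne_of_adj hxy)
    · exact hc y hy (hxv ▸ hxy)
    · exact (hc x hx (hyv ▸ hxy.symm)).symm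
    · exact hf x (mem_erase.2 ⟨hxv, hx⟩) y (mem_erase.2 ⟨hyv, hy⟩) hxy

theorem colorable_induce_neighborSet_of_not_isContained {r : ℕ} (hr : 3 ≤ r)
    (h : ¬ cycleGraph r ⊑ G) (u : V) [Fintype (G.neighborSet u)] :
    (G.induce (G.neighborSet u)).Colorable (r - 2) := by
  rw [← coe_neighborFinset]
  refine G.colorable_induce_of_forall_exists_card_adj_lt fun t hts ht ↦
    G.exists_card_adj_lt_of_isPath_length_ne ht fun x y p hp hpt hlen ↦ h ?_
  exact G.cycleGraph_isContained_of_isPath_of_forall_adj hr p hp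
    (fun z hz ↦ (G.mem_neighborFinset u z).1 (hts (hpt z hz))) (by omega)

end Degenerate

theorem fracChi_le_of_finset_coloring [Fintype V] {α : Type*} [Fintype α] {b : ℕ} (hb : 0 < b)
    (c : V → Finset α) (hc : ∀ v, #(c v) = b) (hadj : ∀ u v, G.Adj u v → Disjoint (c u) (c v)) :
    G.fracChi ≤ Fintype.card α / b := by
  let e := Fintype.equivFin α
  refine csInf_le ⟨0, ?_⟩ ⟨Fintype.card α, b, hb,
    ⟨fun v ↦ (c v).map e.toEmbedding, by simp [hc], fun u v huv ↦ by simpa using hadj u v huv⟩, rfl⟩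
  rintro x ⟨a, b', -, -, rfl⟩
  positivity

theorem fracChi_le_of_colorable_induce_neighborSet [Fintype V] [DecidableRel G.Adj] {k d : ℕ}
    (hd : 0 < d) (hmin : ∀ v, d ≤ G.degree v)
    (hcol : ∀ u, (G.induce (G.neighborSet u)).Colorable k) :
    G.fracChi ≤ k * Fintype.card V / d := by
  let C u := (hcol u).some
  have hnbrs (v : V) : ∃ t : Finset (G.neighborSet v), #t = d := by
    obtain ⟨t, -, ht⟩ := exists_subset_card_eq (s := (univ : Finset (G.neighborSet v))) <|
      (hmin v).trans_eq (by rw [card_univ, card_neighborSet_eq_degree])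
    exact ⟨t, ht⟩
  choose t ht using hnbrs
  let c v : Finset (V × Fin k) :=
    (t v).map ⟨fun u ↦ (u.1, C u.1 ⟨v, G.adj_symm u.2⟩),
      fun _ _ h ↦ Subtype.ext (congrArg Prod.fst h)⟩
  have hdisj : ∀ u v, G.Adj u v → Disjoint (c u) (c v) := by
    intro u v huv
    rw [Finset.disjoint_left]
    rintro _ hu hv
    simp only [c, mem_map] at hu hv
    obtain ⟨⟨w, hwu⟩, -, rfl⟩ := hu
    obtain ⟨⟨w', hwv⟩, -, hw⟩ := hv
    obtain ⟨rfl, hcol⟩ := Prod.ext_iff.1 hw.symm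
    exact (C w).valid (G.induce_adj.2 huv) hcol
  calc G.fracChi ≤ Fintype.card (V × Fin k) / d :=
        G.fracChi_le_of_finset_coloring hd c (fun v ↦ (card_map _).trans (ht v)) hdisj
    _ = k * Fintype.card V / d := by simp [mul_comm]

end SimpleGraph

theorem fracChi_le_of_cycleFree_general {V : Type*} [Fintype V]
    (G : SimpleGraph V) [DecidableRel G.Adj] (r n d : ℕ) (hr : 3 ≤ r)
    (hn : Fintype.card V = n) (hd : 0 < d)
    (hfree : SubgraphFree (SimpleGraph.cycleGraph r) G)
    (hmin : ∀ v, d ≤ G.degree v) :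
    G.fracChi ≤ ((r : ℝ) - 2) * n / d := by
  have hcol (u : V) : (G.induce (G.neighborSet u)).Colorable (r - 2) :=
    G.colorable_induce_neighborSet_of_not_isContained hr
      (G.not_isContained_of_subgraphFree hfree) u
  calc G.fracChi ≤ ((r - 2 : ℕ) : ℝ) * Fintype.card V / d :=
        G.fracChi_le_of_colorable_induce_neighborSet hd hmin hcol
    _ = ((r : ℝ) - 2) * n / d := by rw [hn, Nat.cast_sub (by omega), Nat.cast_ofNat]

/-- Fix `r ≥ 3`. Any `C_r`-free graph on `n` vertices with minimum degree at least `d > 0`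
has fractional chromatic number at most `(r - 2) · n / d`. -/
theorem fracChi_le_of_cycleFree {V : Type*} [Fintype V] [DecidableEq V]
    (G : SimpleGraph V) [DecidableRel G.Adj] (r n d : ℕ) (hr : 3 ≤ r)
    (hn : Fintype.card V = n) (hd : 0 < d)
    (hfree : SubgraphFree (SimpleGraph.cycleGraph r) G)
    (hmin : ∀ v, d ≤ G.degree v) :
    G.fracChi ≤ ((r : ℝ) - 2) * n / d :=
  fracChi_le_of_cycleFree_general G r n d hr hn hd hfree hmin
end

section
/- Let G be a triangle-free graph and let S be a stable set of the cube G³ of G. Then the union of the neighbourhoods ⋃_{v ∈ S} N_G(v) is a stable set of G. -/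
/-- The cube `G³` of a graph `G`: two distinct vertices are adjacent iff they are joined in
`G` by a walk of length at most 3. -/
def SimpleGraph.cube {V : Type*} (G : SimpleGraph V) : SimpleGraph V where
  Adj u v := u ≠ v ∧ ∃ p : G.Walk u v, p.length ≤ 3
  symm := ⟨by
    rintro u v ⟨h, p, hp⟩
    exact ⟨h.symm, p.reverse, by simpa using hp⟩⟩
  loopless := ⟨by rintro v ⟨h, -⟩; exact h rfl⟩

/-!
An edge `uv` with `u ∈ N(a)`, `v ∈ N(b)` and `a, b ∈ S` gives the walk `a u v b` of length 3,
so `a = b` because `S` is stable in `G³`; but then `a u v` is a triangle.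
-/

namespace SimpleGraph

variable {V : Type*} {G : SimpleGraph V}

theorem cube_adj_of_adj_of_adj_of_adj {a u v b : V} (hab : a ≠ b) (hau : G.Adj a u)
    (huv : G.Adj u v) (hvb : G.Adj v b) : G.cube.Adj a b :=
  ⟨hab, hau.toWalk.append (huv.toWalk.append hvb.toWalk), by simp⟩

theorem IsStableSet.eq_of_adj_of_adj_of_adj {S : Set V} (hS : G.cube.IsStableSet S) {a u v b : V}
    (ha : a ∈ S) (hb : b ∈ S) (hau : G.Adj a u) (huv : G.Adj u v) (hvb : G.Adj v b) : a = b :=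
  by_contra fun hab ↦ hS a ha b hb (cube_adj_of_adj_of_adj_of_adj hab hau huv hvb)

end SimpleGraph

/-- If `G` is triangle-free and `S` is a stable set of the cube `G³`, then the union of the
neighbourhoods of the vertices of `S` is a stable set of `G`. -/
theorem union_neighborhoods_stable_of_cube_stable {V : Type*} (G : SimpleGraph V)
    (htf : G.CliqueFree 3) (S : Set V) (hS : G.cube.IsStableSet S) :
    G.IsStableSet (⋃ v ∈ S, G.neighborSet v) := by
  intro u hu v hv huv
  simp only [Set.mem_iUnion, SimpleGraph.mem_neighborSet] at hu hv
  obtain ⟨a, haS, hau⟩ := hu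
  obtain ⟨b, hbS, hbv⟩ := hv
  obtain rfl : a = b := hS.eq_of_adj_of_adj_of_adj haS hbS hau huv hbv.symm
  exact G.isIndepSet_neighborSet_of_triangleFree htf a hau hbv huv.ne huv
end

section
/- Let G be a graph with fractional chromatic number at most k and average degree d. Then G has a bipartite induced subgraph of average degree at least d/k; consequently G contains a bipartite induced subgraph of minimum degree at least d/(2k). -/
/-!
Let `β` be the largest average degree of a bipartite induced subgraph `G[A ∪ B]`, `A` and `B`
disjoint stable sets. For two arbitrary stable sets `S`, `T` the pair `(S, T \ S)` shows
`2 e(S, T) ≤ β (|S| + |T|)`, where `e(S, T)` counts the edges from `S` to `T`. Given an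
`(a, b)`-colouring, sum this over all pairs of colour classes: each edge is counted `b²` times
on the left and each vertex `2ab` times on the right, so `d ≤ β · a / b`, hence
`d ≤ β · χ_f(G) ≤ β k`. Repeatedly deleting vertices of degree below
`d / 2k` from a pair attaining `β` leaves a nonempty bipartite induced subgraph of minimum
degree at least `d / 2k`.
-/

open Finset

theorem Finset.sum_sum_filter_mem {ι V M : Type*} [Fintype ι] [DecidableEq ι] [AddCommMonoid M]
    (s : Finset V) (c : V → Finset ι) (f : V → M) :
    ∑ i, ∑ v ∈ s with i ∈ c v, f v = ∑ v ∈ s, #(c v) • f v := by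
  simp_rw [sum_filter]
  rw [sum_comm]
  simp [sum_ite_mem, univ_inter]

theorem Finset.sum_card_filter_mem {ι V : Type*} [Fintype ι] [DecidableEq ι] (s : Finset V)
    (c : V → Finset ι) : ∑ i, #{v ∈ s | i ∈ c v} = ∑ v ∈ s, #(c v) := by
  simp_rw [card_eq_sum_ones {v ∈ s | _ ∈ c v}, sum_sum_filter_mem, smul_eq_mul, mul_one]

namespace SimpleGraph

variable {V : Type*} {G : SimpleGraph V}

theorem isStableSet_empty : G.IsStableSet ∅ := by
  simp [IsStableSet]

theorem isStableSet_singleton (v : V) : G.IsStableSet {v} := by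
  simp [IsStableSet]

theorem isStableSet_colourClass [Fintype V] {ι : Type*} [DecidableEq ι] {c : V → Finset ι}
    (hc : ∀ u v, G.Adj u v → Disjoint (c u) (c v)) (i : ι) :
    G.IsStableSet ↑({v | i ∈ c v} : Finset V) := by
  intro u hu v hv hadj
  simp only [coe_filter, mem_univ, true_and] at hu hv
  exact Finset.disjoint_left.1 (hc u v hadj) hu hv

def colouringRatios (G : SimpleGraph V) : Set ℝ :=
  {x | ∃ a b : ℕ, 0 < b ∧
    (∃ c : V → Finset (Fin a), (∀ v, (c v).card = b) ∧
      ∀ u v, G.Adj u v → Disjoint (c u) (c v)) ∧ x = (a : ℝ) / b}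

theorem fracChi_eq_sInf_colouringRatios [Fintype V] : G.fracChi = sInf G.colouringRatios := rfl

theorem colouringRatios_nonempty [Fintype V] : G.colouringRatios.Nonempty :=
  ⟨_, Fintype.card V, 1, one_pos, ⟨fun v => {Fintype.equivFin V v}, fun _ => rfl,
    fun _ _ huv => disjoint_singleton.2 fun h => huv.ne ((Fintype.equivFin V).injective h)⟩, rfl⟩

section StablePairs

variable [Fintype V] [DecidableEq V]

open Classical in
variable (G) in
noncomputable def stablePairs : Finset (Finset V × Finset V) :=
  {p | Disjoint p.1 p.2 ∧ G.IsStableSet ↑p.1 ∧ G.IsStableSet ↑p.2 ∧ (p.1 ∪ p.2).Nonempty}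

theorem mk_mem_stablePairs {A B : Finset V} :
    (A, B) ∈ G.stablePairs ↔
      Disjoint A B ∧ G.IsStableSet ↑A ∧ G.IsStableSet ↑B ∧ (A ∪ B).Nonempty := by
  simp [stablePairs]

theorem singleton_empty_mem_stablePairs (v : V) : ({v}, ∅) ∈ G.stablePairs :=
  mk_mem_stablePairs.2 ⟨disjoint_empty_right _, by simpa using isStableSet_singleton v,
    by simpa using isStableSet_empty, by simp⟩

end StablePairs

variable [DecidableRel G.Adj]

theorem IsStableSet.filter_adj_eq_empty {s : Finset V} (hs : G.IsStableSet ↑s) {v : V}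
    (hv : v ∈ s) : {w ∈ s | G.Adj v w} = ∅ :=
  filter_eq_empty_iff.2 fun _ hw => hs v hv _ hw

theorem sum_card_filter_adj_comm (A B : Finset V) :
    ∑ a ∈ A, #{w ∈ B | G.Adj a w} = ∑ b ∈ B, #{w ∈ A | G.Adj b w} := by
  simp_rw [card_filter]
  rw [sum_comm]
  simp_rw [G.adj_comm]

theorem sum_sum_sum_card_filter_adj_colourClass [Fintype V] {ι : Type*} [Fintype ι]
    [DecidableEq ι] {c : V → Finset ι} {b : ℕ} (hc : ∀ v, #(c v) = b) :
    ∑ i, ∑ j, ∑ u ∈ {v | i ∈ c v}, #{w ∈ {v | j ∈ c v} | G.Adj u w} =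
      b * b * (2 * #G.edgeFinset) := by
  have hnbr : ∀ u, ∑ j, #{w ∈ {v | j ∈ c v} | G.Adj u w} = b * G.degree u := fun u => by
    have hcomm : ∀ j, ({w ∈ {v | j ∈ c v} | G.Adj u w} : Finset V) =
        {w ∈ G.neighborFinset u | j ∈ c w} :=
      fun j => by ext w; simp [and_comm]
    simp_rw [hcomm, sum_card_filter_mem, hc, sum_const, card_neighborFinset_eq_degree,
      smul_eq_mul, mul_comm]
  calc ∑ i, ∑ j, ∑ u ∈ {v | i ∈ c v}, #{w ∈ {v | j ∈ c v} | G.Adj u w}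
      = ∑ i, ∑ u ∈ {v | i ∈ c v}, b * G.degree u := by
        simp_rw [← hnbr]
        exact sum_congr rfl fun i _ => sum_comm
    _ = ∑ u, b * (b * G.degree u) := by simp_rw [sum_sum_filter_mem, hc, smul_eq_mul]
    _ = b * b * (2 * #G.edgeFinset) := by
        rw [← mul_sum, ← mul_sum, sum_degrees_eq_twice_card_edges, mul_assoc]

variable (G) in
/-- The average degree of `G[A ∪ B]` when `A` and `B` are disjoint stable sets: then all its
edges run between `A` and `B`. -/
noncomputable def bipartiteAvgDegree (A B : Finset V) : ℝ :=
  2 * (∑ a ∈ A, (#{w ∈ B | G.Adj a w} : ℝ)) / (#A + #B)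

variable [DecidableEq V]

theorem sum_card_filter_adj_insert {W : Finset V} {v : V} (hv : v ∉ W) :
    ∑ u ∈ insert v W, #{w ∈ insert v W | G.Adj u w} =
      ∑ u ∈ W, #{w ∈ W | G.Adj u w} + 2 * #{w ∈ W | G.Adj v w} := by
  have hsymm : ∑ u ∈ W, (if G.Adj u v then 1 else 0) = #{w ∈ W | G.Adj v w} := by
    rw [card_filter]
    exact sum_congr rfl fun u _ => by simp only [G.adj_comm]
  simp only [card_filter, sum_insert hv, G.loopless.irrefl v, if_false, zero_add,
    sum_add_distrib] at hsymm ⊢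
  omega

/-- Deleting a vertex of degree `< t` preserves the hypothesis, even strictly, so repeated
deletion never empties `U`. -/
theorem exists_subset_forall_le_card_filter_adj {t : ℝ} {U : Finset V} (hU : U.Nonempty)
    (h : 2 * t * #U ≤ ∑ u ∈ U, (#{w ∈ U | G.Adj u w} : ℝ)) :
    ∃ W ⊆ U, W.Nonempty ∧ ∀ v ∈ W, t ≤ #{w ∈ W | G.Adj v w} := by
  induction U using Finset.strongInduction with
  | H U ih =>
    by_cases hmin : ∀ v ∈ U, t ≤ #{w ∈ U | G.Adj v w}
    · exact ⟨U, Subset.rfl, hU, hmin⟩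
    push Not at hmin
    obtain ⟨v, hvU, hv⟩ := hmin
    have hdeg : {w ∈ U.erase v | G.Adj v w} = {w ∈ U | G.Adj v w} := by
      rw [filter_erase, erase_eq_of_notMem (by simp)]
    have hsum : ∑ u ∈ U, (#{w ∈ U | G.Adj u w} : ℝ) =
        ∑ u ∈ U.erase v, (#{w ∈ U.erase v | G.Adj u w} : ℝ) + 2 * #{w ∈ U | G.Adj v w} := by
      rw [← hdeg]
      exact_mod_cast insert_erase hvU ▸ sum_card_filter_adj_insert (notMem_erase v U)
    have hcard : (#(U.erase v) : ℝ) + 1 = #U := by exact_mod_cast card_erase_add_one hvU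
    have hlt : 2 * t * #(U.erase v) < ∑ u ∈ U.erase v, (#{w ∈ U.erase v | G.Adj u w} : ℝ) := by
      rw [← hcard, mul_add, mul_one, hsum] at h
      linarith
    have hne : (U.erase v).Nonempty := by
      rw [nonempty_iff_ne_empty]
      rintro hempty
      simp [hempty] at hlt
    obtain ⟨W, hWU, hW, hmin⟩ := ih _ (erase_ssubset hvU) hne hlt.le
    exact ⟨W, hWU.trans (erase_subset v U), hW, hmin⟩

theorem sum_card_filter_adj_union {A B : Finset V} (hAB : Disjoint A B)
    (hA : G.IsStableSet ↑A) (hB : G.IsStableSet ↑B) :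
    ∑ v ∈ A ∪ B, #{w ∈ A ∪ B | G.Adj v w} = 2 * ∑ a ∈ A, #{w ∈ B | G.Adj a w} := by
  have hA' : ∀ v ∈ A, #{w ∈ A ∪ B | G.Adj v w} = #{w ∈ B | G.Adj v w} := fun v hv => by
    rw [filter_union, hA.filter_adj_eq_empty hv, empty_union]
  have hB' : ∀ v ∈ B, #{w ∈ A ∪ B | G.Adj v w} = #{w ∈ A | G.Adj v w} := fun v hv => by
    rw [filter_union, hB.filter_adj_eq_empty hv, union_empty]
  rw [sum_union hAB, sum_congr rfl hA', sum_congr rfl hB', ← sum_card_filter_adj_comm]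
  ring

theorem exists_stablePair_forall_le_card_filter_adj {t : ℝ} {A B : Finset V}
    (hAB : Disjoint A B) (hA : G.IsStableSet ↑A) (hB : G.IsStableSet ↑B)
    (hne : (A ∪ B).Nonempty) (h : t * (#A + #B) ≤ ∑ a ∈ A, (#{w ∈ B | G.Adj a w} : ℝ)) :
    ∃ A' B' : Finset V, Disjoint A' B' ∧ G.IsStableSet ↑A' ∧ G.IsStableSet ↑B' ∧
      (A' ∪ B').Nonempty ∧ ∀ v ∈ A' ∪ B', t ≤ #{w ∈ A' ∪ B' | G.Adj v w} := by
  have hdeg : 2 * t * #(A ∪ B) ≤ ∑ v ∈ A ∪ B, (#{w ∈ A ∪ B | G.Adj v w} : ℝ) := by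
    have hsum : ∑ v ∈ A ∪ B, (#{w ∈ A ∪ B | G.Adj v w} : ℝ) =
        2 * ∑ a ∈ A, (#{w ∈ B | G.Adj a w} : ℝ) := by
      exact_mod_cast sum_card_filter_adj_union hAB hA hB
    rw [card_union_of_disjoint hAB, hsum]
    push_cast
    linarith
  obtain ⟨W, hW, hWne, hmin⟩ := exists_subset_forall_le_card_filter_adj hne hdeg
  have hsplit : W ∩ A ∪ W ∩ B = W := by rw [← inter_union_distrib_left, inter_eq_left.2 hW]
  refine ⟨W ∩ A, W ∩ B, hAB.mono inter_subset_right inter_subset_right,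
    hA.mono (by simp), hB.mono (by simp), ?_, ?_⟩ <;> rw [hsplit]
  exacts [hWne, hmin]

variable [Fintype V]

variable (G) in
noncomputable def maxBipartiteAvgDegree [Nonempty V] : ℝ :=
  G.stablePairs.sup' ⟨_, singleton_empty_mem_stablePairs (Classical.arbitrary V)⟩
    fun p => G.bipartiteAvgDegree p.1 p.2

variable [Nonempty V]

theorem bipartiteAvgDegree_le_max {A B : Finset V} (h : (A, B) ∈ G.stablePairs) :
    G.bipartiteAvgDegree A B ≤ G.maxBipartiteAvgDegree := by
  unfold maxBipartiteAvgDegree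
  exact le_sup' (fun p : Finset V × Finset V => G.bipartiteAvgDegree p.1 p.2) h

theorem maxBipartiteAvgDegree_nonneg : 0 ≤ G.maxBipartiteAvgDegree := by
  obtain ⟨v⟩ := ‹Nonempty V›
  refine le_trans ?_ (bipartiteAvgDegree_le_max (singleton_empty_mem_stablePairs v))
  simp [bipartiteAvgDegree]

theorem exists_mem_stablePairs_bipartiteAvgDegree_eq_max :
    ∃ p ∈ G.stablePairs, G.bipartiteAvgDegree p.1 p.2 = G.maxBipartiteAvgDegree := by
  unfold maxBipartiteAvgDegree
  obtain ⟨p, hp, h⟩ :=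
    exists_mem_eq_sup' _ fun p : Finset V × Finset V => G.bipartiteAvgDegree p.1 p.2
  exact ⟨p, hp, h.symm⟩

/-- `S` has no neighbours in `S ∩ T`, so `(S, T \ S)` is a stable pair carrying the same
edges. -/
theorem two_mul_sum_card_filter_adj_le {S T : Finset V} (hS : G.IsStableSet ↑S)
    (hT : G.IsStableSet ↑T) :
    2 * ∑ u ∈ S, (#{w ∈ T | G.Adj u w} : ℝ) ≤ G.maxBipartiteAvgDegree * (#S + #T) := by
  rcases S.eq_empty_or_nonempty with rfl | hSne
  · simpa using mul_nonneg maxBipartiteAvgDegree_nonneg (Nat.cast_nonneg #T)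
  have hsdiff : ∀ u ∈ S, {w ∈ T \ S | G.Adj u w} = {w ∈ T | G.Adj u w} := fun u hu => by
    ext w
    simp only [mem_filter, mem_sdiff, and_congr_left_iff, and_iff_left_iff_imp]
    exact fun hadj _ hw => hS u hu w hw hadj
  have hpair : (S, T \ S) ∈ G.stablePairs :=
    mk_mem_stablePairs.2 ⟨disjoint_sdiff, hS, hT.mono (by simp), hSne.mono subset_union_left⟩
  have hle := bipartiteAvgDegree_le_max hpair
  have hpos : (0 : ℝ) < #S + #(T \ S) := by
    have := hSne.card_pos
    positivity
  rw [bipartiteAvgDegree, div_le_iff₀ hpos, sum_congr rfl fun u hu => by rw [hsdiff u hu]] at hle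
  have hcard : (#(T \ S) : ℝ) ≤ #T := by exact_mod_cast card_le_card sdiff_subset
  exact hle.trans (mul_le_mul_of_nonneg_left (by linarith) maxBipartiteAvgDegree_nonneg)

theorem avgDegree_le_mul_of_colouring {ι : Type*} [Fintype ι] [DecidableEq ι]
    {c : V → Finset ι} {b : ℕ} (hb : 0 < b) (hcard : ∀ v, #(c v) = b)
    (hc : ∀ u v, G.Adj u v → Disjoint (c u) (c v)) :
    2 * #G.edgeFinset / Fintype.card V ≤ G.maxBipartiteAvgDegree * (Fintype.card ι / b) := by
  have hpairs := sum_le_sum fun i (_ : i ∈ univ) => sum_le_sum fun j (_ : j ∈ univ) =>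
    two_mul_sum_card_filter_adj_le (isStableSet_colourClass hc i) (isStableSet_colourClass hc j)
  have hedges : ∑ i, ∑ j, ∑ u ∈ {v | i ∈ c v}, (#{w ∈ {v | j ∈ c v} | G.Adj u w} : ℝ) =
      b * b * (2 * #G.edgeFinset) := by
    exact_mod_cast sum_sum_sum_card_filter_adj_colourClass hcard
  have hvertices : ∑ i, (#({v | i ∈ c v} : Finset V) : ℝ) = Fintype.card V * b := by
    rw [← Nat.cast_sum, sum_card_filter_mem]
    simp [hcard]
  simp only [← mul_sum, hedges, sum_add_distrib, sum_const, card_univ, nsmul_eq_mul,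
    hvertices] at hpairs
  have hbR : (0 : ℝ) < b := by exact_mod_cast hb
  have hn : (0 : ℝ) < Fintype.card V := by exact_mod_cast Fintype.card_pos
  rw [div_le_iff₀ hn, mul_div_assoc', div_mul_eq_mul_div, le_div_iff₀ hbR]
  refine le_of_mul_le_mul_right ?_ (by positivity : (0 : ℝ) < 2 * b)
  linarith

theorem avgDegree_le_mul_fracChi :
    (2 * #G.edgeFinset / Fintype.card V : ℝ) ≤ G.maxBipartiteAvgDegree * G.fracChi := by
  have hcol : ∀ x ∈ G.colouringRatios,
      2 * #G.edgeFinset / Fintype.card V ≤ G.maxBipartiteAvgDegree * x := by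
    rintro _ ⟨a, b, hb, ⟨c, hcard, hc⟩, rfl⟩
    simpa using avgDegree_le_mul_of_colouring hb hcard hc
  rcases (maxBipartiteAvgDegree_nonneg (G := G)).eq_or_lt with hzero | hpos
  · obtain ⟨x, hx⟩ := G.colouringRatios_nonempty
    simpa [← hzero] using hcol x hx
  · rw [fracChi_eq_sInf_colouringRatios, ← div_le_iff₀' hpos]
    exact le_csInf colouringRatios_nonempty fun x hx => (div_le_iff₀' hpos).2 (hcol x hx)

end SimpleGraph

/-- Any graph with fractional chromatic number at most `k` and average degree `d` has a
bipartite induced subgraph (two disjoint stable sets `A`, `B`, edges of the induced subgraph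
being those between `A` and `B`) of average degree at least `d / k`; consequently it contains
a bipartite induced subgraph of minimum degree at least `d / (2k)`. -/
theorem bipartite_induced_of_fracChi {V : Type*} [Fintype V] [DecidableEq V] [Nonempty V]
    (G : SimpleGraph V) [DecidableRel G.Adj] (k d : ℝ) (hk : 0 < k)
    (hchi : G.fracChi ≤ k)
    (hd : d = 2 * (G.edgeFinset.card : ℝ) / (Fintype.card V)) :
    (∃ A B : Finset V, Disjoint A B ∧ G.IsStableSet ↑A ∧ G.IsStableSet ↑B ∧
        (A ∪ B).Nonempty ∧
        d / k ≤ 2 * (∑ a ∈ A, ((B.filter (G.Adj a)).card : ℝ)) / (A.card + B.card)) ∧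
      (∃ A B : Finset V, Disjoint A B ∧ G.IsStableSet ↑A ∧ G.IsStableSet ↑B ∧
        (A ∪ B).Nonempty ∧
        ∀ v ∈ A ∪ B, d / (2 * k) ≤ (((A ∪ B).filter (G.Adj v)).card : ℝ)) := by
  have hmax : d / k ≤ G.maxBipartiteAvgDegree := by
    rw [div_le_iff₀ hk, hd]
    exact G.avgDegree_le_mul_fracChi.trans
      (mul_le_mul_of_nonneg_left hchi G.maxBipartiteAvgDegree_nonneg)
  obtain ⟨⟨A, B⟩, hAB, hmaxAB⟩ := G.exists_mem_stablePairs_bipartiteAvgDegree_eq_max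
  obtain ⟨hdisj, hA, hB, hne⟩ := SimpleGraph.mk_mem_stablePairs.1 hAB
  have havg : d / k ≤ G.bipartiteAvgDegree A B := hmax.trans hmaxAB.ge
  refine ⟨⟨A, B, hdisj, hA, hB, hne, havg⟩,
    SimpleGraph.exists_stablePair_forall_le_card_filter_adj hdisj hA hB hne ?_⟩
  have hpos : (0 : ℝ) < A.card + B.card := by
    rw [← Nat.cast_add, ← card_union_of_disjoint hdisj]
    exact_mod_cast hne.card_pos
  rw [SimpleGraph.bipartiteAvgDegree, le_div_iff₀ hpos, div_mul_eq_mul_div, div_le_iff₀ hk] at havg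
  rw [div_mul_eq_mul_div, div_le_iff₀ (by positivity)]
  linarith
end
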